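/- arXiv:0710.5566 — 6 statements merged into one kernel-verified Lean document; each statement's English description precedes it below -/
import Mathlib

section
/- Let ξ, η ∈ c₀*. Then ξ ≺ η if and only if there exist an orthostochastic matrix Q and a sequence d : ℕ → ℝ with 0 ≤ d_i ≤ 1 for all i such that ξ_i = d_i · ∑_{j=1}^∞ Q_{ij} η_j for every i. -/
/-!
Reverse direction: an orthostochastic matrix is doubly substochastic, and for such a matrix `Q`
and nonincreasing `η ≥ 0` the partial sums of `Qη` are dominated by those of `η`.

Forward direction: the rows of an orthogonal `U` are produced by a cascade of plane rotations.
A unit vector `v` (initially `e₀`) carries the `η`-mass `m = ∑ v_j² η_j`. At step `i` an unused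
coordinate `f` is chosen with `η_f` on the other side of `ξ_i` from `m`: a small one when
`m > ξ_i`, the first unused one when `m < ξ_i` (majorization guarantees `η_f ≥ ξ_i` then).
The pair `(v, e_f)` is rotated into the row `cos • v + sin • e_f`, of `η`-mass exactly `ξ_i`,
and the new carried vector `sin • v - cos • e_f`; when `m = ξ_i` or `ξ_i = 0` the row is `v`.
The rows are orthonormal, the carried vectors converge to a ghost vector `w`, and completeness
fails exactly by `w` and by the unit vectors of the coordinates never used. These extra rows
have positive `η`-mass, so as `ξ → 0` they can be placed at positions where `ξ` lies below
that mass. Then `ξ_i ≤ (U²η)_i` for all `i`, and `d_i = ξ_i / (U²η)_i`.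
-/

noncomputable section

open Filter Finset

/-- `ξ ∈ c₀*`: a nonnegative, nonincreasing sequence converging to `0`
(indexed from `0` here; the paper indexes from `1`). -/
def IsCoStar (ξ : ℕ → ℝ) : Prop :=
  (∀ n, 0 ≤ ξ n) ∧ Antitone ξ ∧ Tendsto ξ atTop (nhds 0)

/-- `ξ ≺ η` (η majorizes ξ): all partial sums of `ξ` are dominated by those of `η`. -/
def Maj (ξ η : ℕ → ℝ) : Prop :=
  ∀ n : ℕ, ∑ j ∈ range n, ξ j ≤ ∑ j ∈ range n, η j

/-- `ξ ≼ η` (η strongly majorizes ξ): `ξ ≺ η` and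
`liminf_n ∑_{j<n} (η_j - ξ_j) = 0` (the liminf taken in the extended reals). -/
def SMaj (ξ η : ℕ → ℝ) : Prop :=
  Maj ξ η ∧
    liminf (fun n => ((∑ j ∈ range n, (η j - ξ j) : ℝ) : EReal)) atTop = 0

/-- A matrix `U : ℕ × ℕ → ℝ` is orthogonal if its rows form an orthonormal family in ℓ²
and its columns form an orthonormal family in ℓ². -/
def OrthogonalMatrix (U : ℕ → ℕ → ℝ) : Prop :=
  (∀ i i', HasSum (fun j => U i j * U i' j) (if i = i' then (1 : ℝ) else 0)) ∧
  (∀ j j', HasSum (fun i => U i j * U i j') (if j = j' then (1 : ℝ) else 0))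

/-- A matrix `Q` is orthostochastic if it is the entrywise square of an orthogonal matrix. -/
def Orthostochastic (Q : ℕ → ℕ → ℝ) : Prop :=
  ∃ U : ℕ → ℕ → ℝ, OrthogonalMatrix U ∧ ∀ i j, Q i j = (U i j) ^ 2

open Topology

theorem sum_range_mul_le_sum_range {η c : ℕ → ℝ} (hη0 : ∀ j, 0 ≤ η j) (hη : Antitone η)
    (hc0 : ∀ j, 0 ≤ c j) (hc1 : ∀ j, c j ≤ 1) {m n : ℕ} (hc : ∑ j ∈ range m, c j ≤ n) :
    ∑ j ∈ range m, c j * η j ≤ ∑ j ∈ range n, η j := by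
  have hsplit : ∀ j, c j * η j ≤ c j * η n + if j < n then η j - η n else 0 := by
    intro j
    split_ifs with h
    · nlinarith [hη h.le, hc1 j, hc0 j]
    · nlinarith [hη (not_lt.1 h), hc0 j]
  have hhead : ∑ j ∈ range m, (if j < n then η j - η n else 0) ≤ ∑ j ∈ range n, (η j - η n) := by
    rw [← sum_filter]
    refine sum_le_sum_of_subset_of_nonneg (fun j hj => ?_) fun j hj _ => ?_
    · simpa using (mem_filter.1 hj).2
    · exact sub_nonneg.2 (hη (mem_range.1 hj).le)
  calc ∑ j ∈ range m, c j * η j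
      ≤ ∑ j ∈ range m, (c j * η n + if j < n then η j - η n else 0) :=
        sum_le_sum fun j _ => hsplit j
    _ = (∑ j ∈ range m, c j) * η n + ∑ j ∈ range m, (if j < n then η j - η n else 0) := by
      rw [sum_add_distrib, sum_mul]
    _ ≤ n * η n + ∑ j ∈ range n, (η j - η n) := by gcongr; exact hη0 n
    _ = ∑ j ∈ range n, η j := by simp

theorem maj_of_le_substochastic {ξ η s : ℕ → ℝ} {Q : ℕ → ℕ → ℝ} (hη0 : ∀ j, 0 ≤ η j)
    (hη : Antitone η) (hQ0 : ∀ i j, 0 ≤ Q i j) (hrow : ∀ i (F : Finset ℕ), ∑ j ∈ F, Q i j ≤ 1)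
    (hcol : ∀ j (F : Finset ℕ), ∑ i ∈ F, Q i j ≤ 1)
    (hs : ∀ i, HasSum (fun j => Q i j * η j) (s i)) (hξs : ∀ i, ξ i ≤ s i) : Maj ξ η := by
  intro n
  have hsum : HasSum (fun j => (∑ i ∈ range n, Q i j) * η j) (∑ i ∈ range n, s i) := by
    simpa only [sum_mul] using hasSum_sum fun i _ => hs i
  refine (sum_le_sum fun i _ => hξs i).trans (hasSum_le_of_sum_le hsum fun F => ?_)
  obtain ⟨M, hM⟩ := F.exists_nat_subset_range
  calc ∑ j ∈ F, (∑ i ∈ range n, Q i j) * η j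
      ≤ ∑ j ∈ range M, (∑ i ∈ range n, Q i j) * η j :=
        sum_le_sum_of_subset_of_nonneg hM fun j _ _ =>
          mul_nonneg (sum_nonneg fun i _ => hQ0 i j) (hη0 j)
    _ ≤ ∑ j ∈ range n, η j := by
      refine sum_range_mul_le_sum_range hη0 hη (fun j => sum_nonneg fun i _ => hQ0 i j)
        (fun j => hcol j _) ?_
      rw [sum_comm]
      simpa using sum_le_sum fun i (_ : i ∈ range n) => hrow i (range M)

namespace Orthostochastic

variable {Q : ℕ → ℕ → ℝ}

theorem nonneg (hQ : Orthostochastic Q) (i j : ℕ) : 0 ≤ Q i j := by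
  obtain ⟨U, -, hQU⟩ := hQ
  exact hQU i j ▸ sq_nonneg _

theorem sum_row_le_one (hQ : Orthostochastic Q) (i : ℕ) (F : Finset ℕ) :
    ∑ j ∈ F, Q i j ≤ 1 := by
  obtain ⟨U, hU, hQU⟩ := hQ
  simp only [hQU, sq]
  exact sum_le_hasSum F (fun j _ => mul_self_nonneg _) (by simpa using hU.1 i i)

theorem sum_col_le_one (hQ : Orthostochastic Q) (j : ℕ) (F : Finset ℕ) :
    ∑ i ∈ F, Q i j ≤ 1 := by
  obtain ⟨U, hU, hQU⟩ := hQ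
  simp only [hQU, sq]
  exact sum_le_hasSum F (fun i _ => mul_self_nonneg _) (by simpa using hU.2 j j)

end Orthostochastic

theorem exists_equiv_sum_nat {ι : Type*} [Countable ι] {P : ι → ℕ → Prop}
    (hP : ∀ i, ∀ᶠ n in atTop, P i n) :
    ∃ e : ℕ ⊕ ι ≃ ℕ, (∀ k, k ≤ e (.inl k)) ∧ ∀ i, P i (e (.inr i)) := by
  classical
  obtain ⟨enc, henc⟩ := Countable.exists_injective_nat ι
  choose N hN using fun i => eventually_atTop.1 (hP i)
  -- odd, distinct slots beyond the thresholds; the even numbers stay free for `ℕ`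
  let slot : ι → ℕ := fun i => 2 * Nat.pair (enc i) (N i) + 1
  have hslot : Function.Injective slot := fun a b h =>
    henc (Nat.pair_eq_pair.1 (by simpa [slot] using h)).1
  have hinf : (Set.range slot)ᶜ.Infinite :=
    Set.infinite_of_injective_forall_mem (f := fun n => 2 * n) (fun a b h => by simpa using h)
      fun n ⟨i, hi⟩ => by simp only [slot] at hi; omega
  have := hinf.to_subtype
  refine ⟨(Equiv.sumCongr (Nat.Subtype.orderIsoOfNat _).toEquiv
    (Equiv.ofInjective slot hslot)).trans ((Equiv.sumComm _ _).trans (Equiv.Set.sumCompl _)),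
    fun k => ?_, fun i => ?_⟩
  · have hmono : StrictMono fun k => (Nat.Subtype.orderIsoOfNat (Set.range slot)ᶜ k : ℕ) :=
      fun a b h => (Nat.Subtype.orderIsoOfNat _).strictMono h
    simpa using hmono.id_le k
  · simpa using hN i _ (by simp only [slot]; linarith [Nat.right_le_pair (enc i) (N i)])

theorem OrthogonalMatrix.of_equiv {α : Type*} [DecidableEq α] (R : α → ℕ → ℝ) (e : ℕ ≃ α)
    (hrow : ∀ a b, HasSum (fun j => R a j * R b j) (if a = b then 1 else 0))
    (hcol : ∀ j j', HasSum (fun a => R a j * R a j') (if j = j' then 1 else 0)) :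
    OrthogonalMatrix fun p => R (e p) :=
  ⟨fun p p' => by simpa [e.injective.eq_iff] using hrow (e p) (e p'),
    fun j j' => (e.hasSum_iff (f := fun a => R a j * R a j')).2 (hcol j j')⟩

theorem sqrt_interpolation_weights {a m x : ℝ} (hx : x ∈ Set.uIcc a m) (ham : a ≠ m) :
    √((x - a) / (m - a)) ^ 2 + √((m - x) / (m - a)) ^ 2 = 1 ∧
      √((x - a) / (m - a)) ^ 2 * m + √((m - x) / (m - a)) ^ 2 * a = x := by
  have hma : m - a ≠ 0 := sub_ne_zero.2 ham.symm
  have hnonneg : 0 ≤ (x - a) / (m - a) ∧ 0 ≤ (m - x) / (m - a) := by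
    rcases Set.mem_uIcc.1 hx with ⟨h1, h2⟩ | ⟨h1, h2⟩
    · exact ⟨div_nonneg (by linarith) (by linarith), div_nonneg (by linarith) (by linarith)⟩
    · exact ⟨div_nonneg_of_nonpos (by linarith) (by linarith),
        div_nonneg_of_nonpos (by linarith) (by linarith)⟩
  rw [Real.sq_sqrt hnonneg.1, Real.sq_sqrt hnonneg.2]
  constructor <;> field_simp <;> ring

theorem summable_sq_mul_of_antitone {v η : ℕ → ℝ} (hv : Summable fun j => v j ^ 2)
    (hη0 : ∀ j, 0 ≤ η j) (hη : Antitone η) : Summable fun j => v j ^ 2 * η j :=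
  (hv.mul_right (η 0)).of_nonneg_of_le (fun j => mul_nonneg (sq_nonneg _) (hη0 j))
    fun j => mul_le_mul_of_nonneg_left (hη (Nat.zero_le j)) (sq_nonneg _)

theorem summable_mul_of_summable_sq {u v : ℕ → ℝ} (hu : Summable fun k => u k ^ 2)
    (hv : Summable fun k => v k ^ 2) : Summable fun k => u k * v k :=
  Summable.of_norm_bounded ((hu.add hv).div_const 2) fun k => by
    rw [Real.norm_eq_abs, abs_mul]
    nlinarith [sq_nonneg (|u k| - |v k|), sq_abs (u k), sq_abs (v k)]

section TailProd

variable {s : ℕ → ℝ}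

def tailProd (s : ℕ → ℝ) (K : ℕ) : ℝ := ⨅ N, ∏ l ∈ Ico K N, s l

variable (hs0 : ∀ l, 0 ≤ s l)
include hs0

theorem tailProd_nonneg (K : ℕ) : 0 ≤ tailProd s K :=
  le_ciInf fun _ => prod_nonneg fun l _ => hs0 l

variable (hs1 : ∀ l, s l ≤ 1)
include hs1

theorem antitone_prod_Ico (K : ℕ) : Antitone fun N => ∏ l ∈ Ico K N, s l := by
  intro N N' h
  dsimp only
  rw [← prod_sdiff (Ico_subset_Ico_right h)]
  exact mul_le_of_le_one_left (prod_nonneg fun l _ => hs0 l) (prod_le_one (fun l _ => hs0 l)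
    fun l _ => hs1 l)

theorem tendsto_prod_Ico_tailProd (K : ℕ) :
    Tendsto (fun N => ∏ l ∈ Ico K N, s l) atTop (𝓝 (tailProd s K)) :=
  tendsto_atTop_ciInf (antitone_prod_Ico hs0 hs1 K)
    ⟨0, Set.forall_mem_range.2 fun _ => prod_nonneg fun l _ => hs0 l⟩

theorem prod_Ico_mul_tailProd {K i : ℕ} (h : K ≤ i) :
    (∏ l ∈ Ico K i, s l) * tailProd s i = tailProd s K := by
  refine tendsto_nhds_unique ((tendsto_prod_Ico_tailProd hs0 hs1 i).const_mul _)
    ((tendsto_prod_Ico_tailProd hs0 hs1 K).congr' ?_)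
  filter_upwards [eventually_ge_atTop i] with N hN
  exact (prod_Ico_consecutive _ h hN).symm

theorem tailProd_eq_mul (K : ℕ) : tailProd s K = s K * tailProd s (K + 1) := by
  rw [← prod_Ico_mul_tailProd hs0 hs1 K.le_succ, prod_Ico_succ_top le_rfl, Ico_self, prod_empty,
    one_mul]

theorem tendsto_tailProd_one {K : ℕ} (hK : 0 < tailProd s K) :
    Tendsto (tailProd s) atTop (𝓝 1) := by
  have hP : ∀ N, 0 < ∏ l ∈ Ico K N, s l := fun N =>
    hK.trans_le (ciInf_le ⟨0, Set.forall_mem_range.2 fun _ => prod_nonneg fun l _ => hs0 l⟩ N)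
  have := (tendsto_const_nhds (x := tailProd s K)).div (tendsto_prod_Ico_tailProd hs0 hs1 K) hK.ne'
  rw [div_self hK.ne'] at this
  refine this.congr' ?_
  filter_upwards [eventually_ge_atTop K] with N hN
  rw [Pi.div_apply, div_eq_iff (hP N).ne', mul_comm, prod_Ico_mul_tailProd hs0 hs1 hN]

end TailProd

/-- A stage of the cascade: the coordinates used so far and the carried vector, a unit vector
supported on them. -/
structure CascadeState where
  used : Finset ℕ
  vec : ℕ → ℝ

namespace CascadeState

open Classical

variable (ξ η : ℕ → ℝ) (i : ℕ) (S : CascadeState)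

def mass : ℝ := ∑ j ∈ S.used, S.vec j ^ 2 * η j

def firstUnused : ℕ := Nat.find (Infinite.exists_notMem_finset S.used)

def firstUnusedBelow (x : ℝ) : ℕ :=
  if h : ∃ j, j ∉ S.used ∧ η j < x then Nat.find h else S.firstUnused

def IsFlush : Prop := ξ i = 0 ∨ S.mass η = ξ i

def IsSurplus : Prop := 0 < ξ i ∧ ξ i < S.mass η

def nextCol : ℕ := if S.IsSurplus ξ η i then S.firstUnusedBelow η (ξ i) else S.firstUnused

def cosCoef : ℝ :=
  if S.IsFlush ξ η i then 1
  else √((ξ i - η (S.nextCol ξ η i)) / (S.mass η - η (S.nextCol ξ η i)))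

def sinCoef : ℝ :=
  if S.IsFlush ξ η i then 0
  else √((S.mass η - ξ i) / (S.mass η - η (S.nextCol ξ η i)))

def row : ℕ → ℝ := fun j =>
  S.cosCoef ξ η i * S.vec j + S.sinCoef ξ η i * (Pi.single (S.nextCol ξ η i) 1 : ℕ → ℝ) j

def step : CascadeState :=
  ⟨insert (S.nextCol ξ η i) S.used,
    fun j =>
      S.sinCoef ξ η i * S.vec j - S.cosCoef ξ η i * (Pi.single (S.nextCol ξ η i) 1 : ℕ → ℝ) j⟩

variable {S}

theorem firstUnused_notMem : S.firstUnused ∉ S.used :=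
  Nat.find_spec (Infinite.exists_notMem_finset S.used)

theorem firstUnused_le {j : ℕ} (hj : j ∉ S.used) : S.firstUnused ≤ j :=
  Nat.find_min' _ hj

variable {η} in
theorem firstUnusedBelow_spec {x : ℝ} (h : ∃ j, j ∉ S.used ∧ η j < x) :
    S.firstUnusedBelow η x ∉ S.used ∧ η (S.firstUnusedBelow η x) < x := by
  rw [firstUnusedBelow, dif_pos h]
  exact Nat.find_spec h

theorem nextCol_notMem : S.nextCol ξ η i ∉ S.used := by
  unfold nextCol firstUnusedBelow
  split_ifs with _ h
  exacts [(Nat.find_spec h).1, firstUnused_notMem, firstUnused_notMem]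

end CascadeState

namespace Cascade

open Classical CascadeState

variable (ξ η : ℕ → ℝ)

def state : ℕ → CascadeState
  | 0 => ⟨{0}, Pi.single 0 1⟩
  | i + 1 => CascadeState.step ξ η i (state i)

def used (i : ℕ) : Finset ℕ := (state ξ η i).used
def vec (i : ℕ) : ℕ → ℝ := (state ξ η i).vec
def mass (i : ℕ) : ℝ := (state ξ η i).mass η
def col (i : ℕ) : ℕ := (state ξ η i).nextCol ξ η i
def cos (i : ℕ) : ℝ := (state ξ η i).cosCoef ξ η i
def sin (i : ℕ) : ℝ := (state ξ η i).sinCoef ξ η i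
def row (i : ℕ) : ℕ → ℝ := (state ξ η i).row ξ η i

/-- The `η`-mass delivered to row `i`. -/
def out (i : ℕ) : ℝ := if (state ξ η i).IsFlush ξ η i then mass ξ η i else ξ i

def EverUsed (j : ℕ) : Prop := ∃ i, j ∈ used ξ η i

def ghost (j : ℕ) : ℝ := limUnder atTop fun i => vec ξ η i j

def IsActive : Prop := ∃ K, 0 < tailProd (sin ξ η) K

/-- Rows added to the cascade rows to complete them to an orthogonal matrix: the ghost row
(`none`, needed when it is nonzero) and a unit row for every column that is never used. -/
def IsExtra : Option ℕ → Prop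
  | none => IsActive ξ η
  | some c => ¬EverUsed ξ η c

def extraRow : Option ℕ → ℕ → ℝ
  | none => ghost ξ η
  | some c => Pi.single c 1

def fullRow : ℕ ⊕ {o // IsExtra ξ η o} → ℕ → ℝ := Sum.elim (row ξ η) fun o => extraRow ξ η o

variable {ξ η} {i : ℕ}

theorem used_zero : used ξ η 0 = {0} := rfl

theorem used_succ (i : ℕ) : used ξ η (i + 1) = insert (col ξ η i) (used ξ η i) := rfl

theorem vec_zero : vec ξ η 0 = Pi.single 0 1 := rfl

theorem vec_succ_apply (i j : ℕ) :
    vec ξ η (i + 1) j =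
      sin ξ η i * vec ξ η i j - cos ξ η i * (Pi.single (col ξ η i) 1 : ℕ → ℝ) j := rfl

theorem row_apply (i j : ℕ) :
    row ξ η i j = cos ξ η i * vec ξ η i j + sin ξ η i * (Pi.single (col ξ η i) 1 : ℕ → ℝ) j := rfl

theorem mass_eq (i : ℕ) : mass ξ η i = ∑ j ∈ used ξ η i, vec ξ η i j ^ 2 * η j := rfl

theorem col_notMem_used (i : ℕ) : col ξ η i ∉ used ξ η i := nextCol_notMem ξ η i

theorem sum_used_succ (i : ℕ) (F : ℕ → ℝ) :
    ∑ j ∈ used ξ η (i + 1), F j = F (col ξ η i) + ∑ j ∈ used ξ η i, F j :=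
  sum_insert (col_notMem_used i)

theorem used_mono : Monotone (used ξ η) :=
  monotone_nat_of_le_succ fun i => by rw [used_succ]; exact subset_insert _ _

theorem card_used (i : ℕ) : #(used ξ η i) = i + 1 := by
  induction i with
  | zero => rfl
  | succ i ih => rw [used_succ, card_insert_of_notMem (col_notMem_used i), ih]

theorem zero_mem_used (i : ℕ) : 0 ∈ used ξ η i := used_mono (Nat.zero_le i) (mem_singleton_self 0)

theorem col_mem_used {k i : ℕ} (h : k < i) : col ξ η k ∈ used ξ η i :=
  used_mono h (by rw [used_succ]; exact mem_insert_self _ _)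

theorem mem_used_iff {e : ℕ} : e ∈ used ξ η i ↔ e = 0 ∨ ∃ k < i, col ξ η k = e := by
  induction i with
  | zero => simp [used_zero]
  | succ i ih =>
    simp only [used_succ, mem_insert, ih, Nat.lt_succ_iff_lt_or_eq]
    constructor
    · rintro (rfl | rfl | ⟨k, hk, rfl⟩)
      exacts [Or.inr ⟨i, Or.inr rfl, rfl⟩, Or.inl rfl, Or.inr ⟨k, Or.inl hk, rfl⟩]
    · rintro (rfl | ⟨k, hk | rfl, rfl⟩)
      exacts [Or.inr (Or.inl rfl), Or.inr (Or.inr ⟨k, hk, rfl⟩), Or.inl rfl]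

theorem col_injective : Function.Injective (col ξ η) := by
  intro k l h
  by_contra hne
  rcases Nat.lt_or_gt_of_ne hne with hlt | hlt
  · exact col_notMem_used l (h ▸ col_mem_used hlt)
  · exact col_notMem_used k (h ▸ col_mem_used hlt)

theorem col_le_of_notMem {j : ℕ} (hj : j ∉ used ξ η i)
    (h : (state ξ η i).IsSurplus ξ η i → η j < ξ i) : col ξ η i ≤ j := by
  unfold col nextCol
  split_ifs with hs
  · have hex : ∃ j, j ∉ (state ξ η i).used ∧ η j < ξ i := ⟨j, hj, h hs⟩
    rw [firstUnusedBelow, dif_pos hex]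
    exact Nat.find_min' hex ⟨hj, h hs⟩
  · exact firstUnused_le hj

theorem col_of_not_surplus (h : ¬(state ξ η i).IsSurplus ξ η i) :
    col ξ η i = (state ξ η i).firstUnused := by
  unfold col nextCol; rw [if_neg h]

theorem eta_col_lt_of_surplus (hη : Tendsto η atTop (𝓝 0))
    (h : (state ξ η i).IsSurplus ξ η i) : η (col ξ η i) < ξ i := by
  obtain ⟨N, hN⟩ := eventually_atTop.1 (hη.eventually (gt_mem_nhds h.1))
  obtain ⟨j, hj⟩ := Infinite.exists_notMem_finset (used ξ η i ∪ range N)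
  rw [mem_union, not_or, mem_range, not_lt] at hj
  unfold col nextCol
  rw [if_pos h]
  exact (firstUnusedBelow_spec ⟨j, hj.1, hN j hj.2⟩).2

theorem vec_eq_zero_of_notMem {j : ℕ} (hj : j ∉ used ξ η i) : vec ξ η i j = 0 := by
  induction i with
  | zero => simpa [vec_zero, used_zero, Pi.single_apply] using hj
  | succ i ih =>
    rw [used_succ, mem_insert, not_or] at hj
    rw [vec_succ_apply, ih hj.2, Pi.single_apply, if_neg hj.1]
    ring

theorem row_eq_zero_of_notMem {j : ℕ} (hj : j ∉ used ξ η (i + 1)) : row ξ η i j = 0 := by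
  rw [used_succ, mem_insert, not_or] at hj
  rw [row_apply, vec_eq_zero_of_notMem hj.2, Pi.single_apply, if_neg hj.1]
  ring

theorem vec_succ_of_mem {j : ℕ} (hj : j ∈ used ξ η i) :
    vec ξ η (i + 1) j = sin ξ η i * vec ξ η i j := by
  rw [vec_succ_apply, Pi.single_apply, if_neg (ne_of_mem_of_not_mem hj (col_notMem_used i))]
  ring

theorem row_of_mem {j : ℕ} (hj : j ∈ used ξ η i) : row ξ η i j = cos ξ η i * vec ξ η i j := by
  rw [row_apply, Pi.single_apply, if_neg (ne_of_mem_of_not_mem hj (col_notMem_used i))]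
  ring

theorem vec_succ_col (i : ℕ) : vec ξ η (i + 1) (col ξ η i) = -cos ξ η i := by
  rw [vec_succ_apply, vec_eq_zero_of_notMem (col_notMem_used i)]
  simp

theorem row_col (i : ℕ) : row ξ η i (col ξ η i) = sin ξ η i := by
  rw [row_apply, vec_eq_zero_of_notMem (col_notMem_used i)]
  simp

theorem sin_nonneg (i : ℕ) : 0 ≤ sin ξ η i := by
  unfold sin sinCoef; split_ifs <;> positivity

theorem sum_vec_succ_sq_mul (i : ℕ) (ω : ℕ → ℝ) :
    ∑ j ∈ used ξ η (i + 1), vec ξ η (i + 1) j ^ 2 * ω j =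
      sin ξ η i ^ 2 * ∑ j ∈ used ξ η i, vec ξ η i j ^ 2 * ω j + cos ξ η i ^ 2 * ω (col ξ η i) := by
  rw [sum_used_succ, vec_succ_col, mul_sum, add_comm]
  congr 1
  · exact sum_congr rfl fun j hj => by rw [vec_succ_of_mem hj]; ring
  · ring

theorem sum_row_sq_mul (i : ℕ) (ω : ℕ → ℝ) :
    ∑ j ∈ used ξ η (i + 1), row ξ η i j ^ 2 * ω j =
      cos ξ η i ^ 2 * ∑ j ∈ used ξ η i, vec ξ η i j ^ 2 * ω j + sin ξ η i ^ 2 * ω (col ξ η i) := by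
  rw [sum_used_succ, row_col, mul_sum, add_comm]
  congr 1
  exact sum_congr rfl fun j hj => by rw [row_of_mem hj]; ring

theorem hasSum_row_mul (i : ℕ) (v : ℕ → ℝ) :
    HasSum (fun j => row ξ η i j * v j) (∑ j ∈ used ξ η (i + 1), row ξ η i j * v j) :=
  hasSum_sum_of_ne_finset_zero fun j hj => by rw [row_eq_zero_of_notMem hj, zero_mul]

section Rotation

variable (hrot : ∀ k, cos ξ η k ^ 2 + sin ξ η k ^ 2 = 1)
include hrot

theorem sum_vec_sq (i : ℕ) : ∑ j ∈ used ξ η i, vec ξ η i j ^ 2 = 1 := by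
  induction i with
  | zero => simp [used_zero, vec_zero]
  | succ i ih =>
    have := sum_vec_succ_sq_mul (ξ := ξ) (η := η) i 1
    simp only [Pi.one_apply, mul_one] at this
    rw [this, ih, mul_one, add_comm, hrot]

theorem sum_row_sq (i : ℕ) : ∑ j ∈ used ξ η (i + 1), row ξ η i j ^ 2 = 1 := by
  have := sum_row_sq_mul (ξ := ξ) (η := η) i 1
  simp only [Pi.one_apply, mul_one] at this
  rw [this, sum_vec_sq hrot, mul_one, hrot]

theorem sum_row_mul_vec {k i : ℕ} (h : k < i) :
    ∑ j ∈ used ξ η i, row ξ η k j * vec ξ η i j = 0 := by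
  induction i, h using Nat.le_induction with
  | base =>
    rw [sum_used_succ, row_col, vec_succ_col]
    have : ∑ j ∈ used ξ η k, row ξ η k j * vec ξ η (k + 1) j =
        cos ξ η k * sin ξ η k * ∑ j ∈ used ξ η k, vec ξ η k j ^ 2 := by
      rw [mul_sum]
      exact sum_congr rfl fun j hj => by rw [row_of_mem hj, vec_succ_of_mem hj]; ring
    rw [this, sum_vec_sq hrot]
    ring
  | succ i hki ih =>
    rw [sum_used_succ, row_eq_zero_of_notMem fun h => col_notMem_used i (used_mono hki h), zero_mul,
      zero_add, ← mul_zero (sin ξ η i), ← ih, mul_sum]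
    exact sum_congr rfl fun j hj => by rw [vec_succ_of_mem hj]; ring

theorem sum_row_mul_row {k i : ℕ} (h : k < i) :
    ∑ j ∈ used ξ η (i + 1), row ξ η k j * row ξ η i j = 0 := by
  rw [sum_used_succ, row_eq_zero_of_notMem fun h' => col_notMem_used i (used_mono h h'), zero_mul,
    zero_add, ← mul_zero (cos ξ η i), ← sum_row_mul_vec hrot h, mul_sum]
  exact sum_congr rfl fun j hj => by rw [row_of_mem hj]; ring

theorem hasSum_row_mul_row (k l : ℕ) :
    HasSum (fun j => row ξ η k j * row ξ η l j) (if k = l then 1 else 0) := by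
  rcases lt_trichotomy k l with h | rfl | h
  · have := hasSum_row_mul (ξ := ξ) (η := η) l (row ξ η k)
    simp only [mul_comm (row ξ η l _), sum_row_mul_row hrot h] at this
    simpa [h.ne] using this
  · simpa [← sq, sum_row_sq hrot] using hasSum_row_mul (ξ := ξ) (η := η) k (row ξ η k)
  · have := hasSum_row_mul (ξ := ξ) (η := η) k (row ξ η l)
    rw [sum_congr rfl fun j _ => mul_comm _ _, sum_row_mul_row hrot h] at this
    simpa [h.ne'] using this

/-- Finite-stage completeness: the rows so far and the current vector form an orthonormal basis
of the coordinates used. -/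
theorem sum_range_row_mul_row (i j j' : ℕ) :
    ∑ k ∈ range i, row ξ η k j * row ξ η k j' =
      (if j = j' ∧ j ∈ used ξ η i then 1 else 0) - vec ξ η i j * vec ξ η i j' := by
  induction i with
  | zero =>
    simp only [range_zero, sum_empty, used_zero, vec_zero, mem_singleton, Pi.single_apply]
    split_ifs <;> grind
  | succ i ih =>
    have hrotate : row ξ η i j * row ξ η i j' + vec ξ η (i + 1) j * vec ξ η (i + 1) j' =
        vec ξ η i j * vec ξ η i j' +
          (Pi.single (col ξ η i) 1 : ℕ → ℝ) j * (Pi.single (col ξ η i) 1 : ℕ → ℝ) j' := by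
      rw [row_apply, row_apply, vec_succ_apply, vec_succ_apply]
      linear_combination (vec ξ η i j * vec ξ η i j' +
        (Pi.single (col ξ η i) 1 : ℕ → ℝ) j * (Pi.single (col ξ η i) 1 : ℕ → ℝ) j') * hrot i
    have hcol := col_notMem_used (ξ := ξ) (η := η) i
    rw [sum_range_succ, ih, used_succ]
    by_cases h : j = j' <;> by_cases hc : j = col ξ η i <;> by_cases hc' : j' = col ξ η i <;>
      simp only [Pi.single_apply, h, hc, hc', mem_insert] at hrotate ⊢ <;> grind

end Rotation

theorem out_eq_of_pos (h : 0 < ξ i) : out ξ η i = ξ i := by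
  unfold out
  split_ifs with hfl
  · exact hfl.resolve_left h.ne'
  · rfl

theorem mass_nonneg (hη : ∀ j, 0 ≤ η j) (i : ℕ) : 0 ≤ mass ξ η i :=
  sum_nonneg fun j _ => mul_nonneg (sq_nonneg _) (hη j)

theorem le_out (hη : ∀ j, 0 ≤ η j) (i : ℕ) : ξ i ≤ out ξ η i := by
  unfold out
  split_ifs with hfl
  · rcases hfl with h0 | h0
    · exact h0 ▸ mass_nonneg hη i
    · exact h0.ge
  · rfl

theorem used_eq_range_of_lt (hξ : Antitone ξ) (h : η (state ξ η i).firstUnused < ξ i) :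
    used ξ η i = range (i + 1) := by
  set J := (state ξ η i).firstUnused
  have hJ : J ∉ used ξ η i := firstUnused_notMem
  have hsub : used ξ η i ⊆ range J := by
    intro e he
    rw [mem_range]
    rcases mem_used_iff.1 he with rfl | ⟨k, hk, rfl⟩
    · exact Nat.pos_of_ne_zero fun h0 => hJ (h0 ▸ zero_mem_used i)
    · exact lt_of_le_of_ne (col_le_of_notMem (fun hJk => hJ (used_mono hk.le hJk))
        fun _ => h.trans_le (hξ hk.le)) fun hkJ => hJ (hkJ ▸ col_mem_used hk)
  have hJle : J ≤ i + 1 := by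
    obtain ⟨x, hx, hxf⟩ := not_subset.1 fun h' : range (i + 2) ⊆ used ξ η i => by
      simpa [card_used] using card_le_card h'
    exact (firstUnused_le hxf).trans (Nat.lt_succ_iff.1 (mem_range.1 hx))
  exact eq_of_subset_of_card_le (hsub.trans (range_subset_range.2 hJle)) (by simp [card_used])

/-- Where majorization enters: if the first unused coordinate of `η` is below `ξ i`, then
exactly the coordinates `0, …, i` have been used. -/
theorem le_mass_of_lt (hξ : Antitone ξ) (hmaj : Maj ξ η)
    (hbal : mass ξ η i = ∑ j ∈ used ξ η i, η j - ∑ k ∈ range i, out ξ η k) (hpos : 0 < ξ i)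
    (h : η (state ξ η i).firstUnused < ξ i) :
    ξ i ≤ mass ξ η i ∧ ξ i + ξ (i + 1) ≤ mass ξ η i + η (state ξ η i).firstUnused := by
  have hused := used_eq_range_of_lt hξ h
  have hJ : (state ξ η i).firstUnused = i + 1 := by
    have h1 : (state ξ η i).firstUnused ∉ used ξ η i := firstUnused_notMem
    have h2 : i + 1 ∉ (state ξ η i).used := by
      change i + 1 ∉ used ξ η i
      simp [hused]
    rw [hused, mem_range, not_lt] at h1
    exact le_antisymm (firstUnused_le h2) h1
  have hout : ∑ k ∈ range i, out ξ η k = ∑ k ∈ range i, ξ k :=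
    sum_congr rfl fun k hk => out_eq_of_pos (hpos.trans_le (hξ (mem_range.1 hk).le))
  rw [hused, hout] at hbal
  rw [hJ]
  have h1 := hmaj (i + 1)
  have h2 := hmaj (i + 2)
  simp only [sum_range_succ] at hbal h1 h2
  constructor <;> linarith

theorem xi_between_of_not_flush (hξ : IsCoStar ξ) (hη : IsCoStar η) (hmaj : Maj ξ η)
    (hbal : mass ξ η i = ∑ j ∈ used ξ η i, η j - ∑ k ∈ range i, out ξ η k)
    (hfl : ¬(state ξ η i).IsFlush ξ η i) :
    (η (col ξ η i) < ξ i ∧ ξ i < mass ξ η i) ∨ (mass ξ η i < ξ i ∧ ξ i ≤ η (col ξ η i)) := by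
  obtain ⟨hne, hmne⟩ := not_or.1 hfl
  have hpos : 0 < ξ i := lt_of_le_of_ne (hξ.1 i) (Ne.symm hne)
  by_cases hs : (state ξ η i).IsSurplus ξ η i
  · exact Or.inl ⟨eta_col_lt_of_surplus hη.2.2 hs, hs.2⟩
  · have hlt : mass ξ η i < ξ i := lt_of_le_of_ne (not_lt.1 fun h => hs ⟨hpos, h⟩) hmne
    refine Or.inr ⟨hlt, ?_⟩
    rw [col_of_not_surplus hs]
    by_contra! h
    exact hlt.not_ge (le_mass_of_lt hξ.2.1 hmaj hbal hpos h).1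

theorem rotation_of_balance (hξ : IsCoStar ξ) (hη : IsCoStar η) (hmaj : Maj ξ η)
    (hbal : mass ξ η i = ∑ j ∈ used ξ η i, η j - ∑ k ∈ range i, out ξ η k) :
    cos ξ η i ^ 2 + sin ξ η i ^ 2 = 1 ∧
      cos ξ η i ^ 2 * mass ξ η i + sin ξ η i ^ 2 * η (col ξ η i) = out ξ η i := by
  by_cases hfl : (state ξ η i).IsFlush ξ η i
  · simp only [cos, sin, out, cosCoef, sinCoef, if_pos hfl]
    constructor <;> ring
  · have hx : ξ i ∈ Set.uIcc (η (col ξ η i)) (mass ξ η i) ∧ η (col ξ η i) ≠ mass ξ η i := by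
      rcases xi_between_of_not_flush hξ hη hmaj hbal hfl with ⟨h1, h2⟩ | ⟨h1, h2⟩
      · exact ⟨Set.mem_uIcc.2 (Or.inl ⟨h1.le, h2.le⟩), (h1.trans h2).ne⟩
      · exact ⟨Set.mem_uIcc.2 (Or.inr ⟨h1.le, h2⟩), (h1.trans_le h2).ne'⟩
    simp only [cos, sin, out, cosCoef, sinCoef, if_neg hfl]
    exact sqrt_interpolation_weights hx.1 hx.2

theorem balance (hξ : IsCoStar ξ) (hη : IsCoStar η) (hmaj : Maj ξ η) (i : ℕ) :
    mass ξ η i = ∑ j ∈ used ξ η i, η j - ∑ k ∈ range i, out ξ η k ∧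
      (0 < ξ i → 0 < mass ξ η i) := by
  induction i with
  | zero =>
    have hm : mass ξ η 0 = η 0 := by simp [mass_eq, used_zero, vec_zero]
    refine ⟨by simp [hm, used_zero], fun _ => hm ▸ lt_of_lt_of_le ‹_› ?_⟩
    simpa using hmaj 1
  | succ i ih =>
    obtain ⟨hbal, hpos⟩ := ih
    obtain ⟨hrot, hrow⟩ := rotation_of_balance hξ hη hmaj hbal
    have hstep := sum_vec_succ_sq_mul (ξ := ξ) (η := η) i η
    rw [← mass_eq, ← mass_eq] at hstep
    have hmass : mass ξ η (i + 1) = mass ξ η i + η (col ξ η i) - out ξ η i := by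
      linear_combination hstep - hrow + (mass ξ η i + η (col ξ η i)) * hrot
    refine ⟨by rw [hmass, sum_used_succ, sum_range_succ, hbal]; ring, fun hpos' => ?_⟩
    have hξi : 0 < ξ i := hpos'.trans_le (hξ.2.1 (Nat.le_succ i))
    by_cases hfl : (state ξ η i).IsFlush ξ η i
    · have hm : mass ξ η i = ξ i := hfl.resolve_left hξi.ne'
      have hcol : col ξ η i = (state ξ η i).firstUnused :=
        col_of_not_surplus fun hs => hs.2.ne' hm
      have hout : out ξ η i = mass ξ η i := by simp only [out, if_pos hfl]
      rw [hmass, hout, add_sub_cancel_left, hcol]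
      by_contra! h0
      have h := (le_mass_of_lt hξ.2.1 hmaj hbal hξi (h0.trans_lt hξi)).2
      linarith
    · rw [hmass, out_eq_of_pos hξi]
      rcases xi_between_of_not_flush hξ hη hmaj hbal hfl with ⟨-, h2⟩ | ⟨-, h2⟩
      · linarith [hη.1 (col ξ η i)]
      · linarith [hpos hξi]

theorem vec_eq_mul_prod {j T i : ℕ} (hj : j ∈ used ξ η T) (hTi : T ≤ i) :
    vec ξ η i j = vec ξ η T j * ∏ l ∈ Ico T i, sin ξ η l := by
  induction i, hTi using Nat.le_induction with
  | base => simp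
  | succ i hTi ih => rw [vec_succ_of_mem (used_mono hTi hj), ih, prod_Ico_succ_top hTi]; ring

theorem ghost_eq_zero {j : ℕ} (hj : ¬EverUsed ξ η j) : ghost ξ η j = 0 := by
  have : (fun i => vec ξ η i j) = fun _ => 0 :=
    funext fun i => vec_eq_zero_of_notMem fun h => hj ⟨i, h⟩
  rw [ghost, this, tendsto_const_nhds.limUnder_eq]

theorem eta_pos_of_not_everUsed (hη : IsCoStar η) {c : ℕ} (hc : ¬EverUsed ξ η c) : 0 < η c := by
  by_contra! h
  have hc0 : η c = 0 := le_antisymm h (hη.1 c)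
  have hbdd : Set.range (col ξ η) ⊆ Set.Iic c := Set.range_subset_iff.2 fun l =>
    col_le_of_notMem (fun hl => hc ⟨l, hl⟩) fun hs => hc0 ▸ hs.1
  exact Set.infinite_range_of_injective col_injective ((Set.finite_Iic c).subset hbdd)

theorem mul_single_eq_zero {v : ℕ → ℝ} {c : ℕ} (hc : v c = 0) :
    (fun j => v j * (Pi.single c 1 : ℕ → ℝ) j) = 0 := by
  ext j
  by_cases h : j = c <;> simp [h, hc]

section Limit

variable (hξ : IsCoStar ξ) (hη : IsCoStar η) (hmaj : Maj ξ η)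
include hξ hη hmaj

theorem cos_sq_add_sin_sq (i : ℕ) : cos ξ η i ^ 2 + sin ξ η i ^ 2 = 1 :=
  (rotation_of_balance hξ hη hmaj (balance hξ hη hmaj i).1).1

theorem sum_row_sq_mul_eta (i : ℕ) :
    ∑ j ∈ used ξ η (i + 1), row ξ η i j ^ 2 * η j = out ξ η i := by
  rw [sum_row_sq_mul, ← mass_eq]
  exact (rotation_of_balance hξ hη hmaj (balance hξ hη hmaj i).1).2

theorem sin_le_one (i : ℕ) : sin ξ η i ≤ 1 := by
  nlinarith [cos_sq_add_sin_sq hξ hη hmaj i, sq_nonneg (cos ξ η i), sin_nonneg (ξ := ξ) (η := η) i]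

theorem tendsto_vec {j T : ℕ} (hj : j ∈ used ξ η T) :
    Tendsto (fun i => vec ξ η i j) atTop (𝓝 (vec ξ η T j * tailProd (sin ξ η) T)) := by
  refine ((tendsto_prod_Ico_tailProd sin_nonneg (sin_le_one hξ hη hmaj) T).const_mul _).congr' ?_
  filter_upwards [eventually_ge_atTop T] with i hi
  exact (vec_eq_mul_prod hj hi).symm

theorem ghost_eq {j T : ℕ} (hj : j ∈ used ξ η T) :
    ghost ξ η j = vec ξ η T j * tailProd (sin ξ η) T :=
  (tendsto_vec hξ hη hmaj hj).limUnder_eq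

theorem tendsto_vec_ghost (j : ℕ) : Tendsto (fun i => vec ξ η i j) atTop (𝓝 (ghost ξ η j)) := by
  by_cases hj : EverUsed ξ η j
  · obtain ⟨T, hT⟩ := hj
    rw [ghost_eq hξ hη hmaj hT]
    exact tendsto_vec hξ hη hmaj hT
  · rw [ghost_eq_zero hj]
    exact tendsto_const_nhds.congr fun i => (vec_eq_zero_of_notMem fun h => hj ⟨i, h⟩).symm

theorem ghost_eq_zero_of_not_active (hA : ¬IsActive ξ η) (j : ℕ) : ghost ξ η j = 0 := by
  by_cases hj : EverUsed ξ η j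
  · obtain ⟨T, hT⟩ := hj
    rw [ghost_eq hξ hη hmaj hT, le_antisymm (not_lt.1 fun h => hA ⟨T, h⟩)
      (tailProd_nonneg sin_nonneg T), mul_zero]
  · exact ghost_eq_zero hj

theorem sum_ghost_sq_mul_used (ω : ℕ → ℝ) (i : ℕ) :
    ∑ j ∈ used ξ η i, ghost ξ η j ^ 2 * ω j =
      tailProd (sin ξ η) i ^ 2 * ∑ j ∈ used ξ η i, vec ξ η i j ^ 2 * ω j := by
  rw [mul_sum]
  exact sum_congr rfl fun j hj => by rw [ghost_eq hξ hη hmaj hj]; ring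

theorem sum_ghost_sq_le (F : Finset ℕ) : ∑ j ∈ F, ghost ξ η j ^ 2 ≤ 1 := by
  refine le_of_tendsto' (tendsto_finsetSum F fun j _ => (tendsto_vec_ghost hξ hη hmaj j).pow 2)
    fun i => ?_
  calc ∑ j ∈ F, vec ξ η i j ^ 2 ≤ ∑ j ∈ F ∪ used ξ η i, vec ξ η i j ^ 2 :=
        sum_le_sum_of_subset_of_nonneg subset_union_left fun _ _ _ => sq_nonneg _
    _ = ∑ j ∈ used ξ η i, vec ξ η i j ^ 2 := (sum_subset subset_union_right fun j _ hj => by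
        rw [vec_eq_zero_of_notMem hj]; ring).symm
    _ = 1 := sum_vec_sq (cos_sq_add_sin_sq hξ hη hmaj) i

theorem summable_ghost_sq : Summable fun j => ghost ξ η j ^ 2 :=
  summable_of_sum_le (fun _ => sq_nonneg _) (sum_ghost_sq_le hξ hη hmaj)

theorem hasSum_ghost_sq (hA : IsActive ξ η) : HasSum (fun j => ghost ξ η j ^ 2) 1 := by
  obtain ⟨K, hK⟩ := hA
  have hsum := summable_ghost_sq hξ hη hmaj
  have htail : ∀ i, tailProd (sin ξ η) i ^ 2 ≤ ∑' j, ghost ξ η j ^ 2 := fun i => by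
    have := sum_ghost_sq_mul_used hξ hη hmaj 1 i
    simp only [Pi.one_apply, mul_one, sum_vec_sq (cos_sq_add_sin_sq hξ hη hmaj)] at this
    exact this ▸ hsum.sum_le_tsum _ fun _ _ => sq_nonneg _
  have hlim := (tendsto_tailProd_one sin_nonneg (sin_le_one hξ hη hmaj) hK).pow 2
  rw [one_pow] at hlim
  convert hsum.hasSum
  exact le_antisymm (le_of_tendsto' hlim htail)
    (hsum.tsum_le_of_sum_le (sum_ghost_sq_le hξ hη hmaj))

theorem summable_ghost_sq_mul_eta : Summable fun j => ghost ξ η j ^ 2 * η j :=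
  summable_sq_mul_of_antitone (summable_ghost_sq hξ hη hmaj) hη.1 hη.2.1

theorem tsum_ghost_sq_mul_eta_pos (hA : IsActive ξ η) : 0 < ∑' j, ghost ξ η j ^ 2 * η j := by
  obtain ⟨K, hK⟩ := hA
  have hξK : 0 < ξ K := by
    refine lt_of_le_of_ne (hξ.1 K) fun h0 => hK.ne' ?_
    have hfl : (state ξ η K).IsFlush ξ η K := Or.inl h0.symm
    have hsin : sin ξ η K = 0 := by simp only [sin, sinCoef, if_pos hfl]
    rw [tailProd_eq_mul sin_nonneg (sin_le_one hξ hη hmaj), hsin, zero_mul]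
  have hmass := (balance hξ hη hmaj K).2 hξK
  calc 0 < tailProd (sin ξ η) K ^ 2 * mass ξ η K := mul_pos (pow_pos hK 2) hmass
    _ = ∑ j ∈ used ξ η K, ghost ξ η j ^ 2 * η j := (sum_ghost_sq_mul_used hξ hη hmaj η K).symm
    _ ≤ ∑' j, ghost ξ η j ^ 2 * η j := (summable_ghost_sq_mul_eta hξ hη hmaj).sum_le_tsum _
      fun j _ => mul_nonneg (sq_nonneg _) (hη.1 j)

theorem hasSum_row_mul_ghost (k : ℕ) : HasSum (fun j => row ξ η k j * ghost ξ η j) 0 := by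
  convert hasSum_row_mul k (ghost ξ η)
  rw [← mul_zero (tailProd (sin ξ η) (k + 1)),
    ← sum_row_mul_vec (cos_sq_add_sin_sq hξ hη hmaj) k.lt_succ_self, mul_sum]
  exact sum_congr rfl fun j hj => by rw [ghost_eq hξ hη hmaj hj]; ring

theorem summable_row_sq (j : ℕ) : Summable fun k => row ξ η k j ^ 2 := by
  refine summable_of_sum_range_le (c := 1) (fun _ => sq_nonneg _) fun i => ?_
  have := sum_range_row_mul_row (cos_sq_add_sin_sq hξ hη hmaj) i j j
  simp only [← sq] at this
  rw [this]
  split_ifs <;> nlinarith [sq_nonneg (vec ξ η i j)]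

theorem hasSum_row_mul_row_col (j j' : ℕ) :
    HasSum (fun k => row ξ η k j * row ξ η k j')
      ((if j = j' ∧ EverUsed ξ η j then 1 else 0) - ghost ξ η j * ghost ξ η j') := by
  have hsum := summable_mul_of_summable_sq (summable_row_sq hξ hη hmaj j)
    (summable_row_sq hξ hη hmaj j')
  rw [hsum.hasSum_iff_tendsto_nat]
  simp only [sum_range_row_mul_row (cos_sq_add_sin_sq hξ hη hmaj)]
  refine Tendsto.sub ?_ ((tendsto_vec_ghost hξ hη hmaj j).mul (tendsto_vec_ghost hξ hη hmaj j'))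
  by_cases hj : EverUsed ξ η j
  · obtain ⟨T, hT⟩ := hj
    refine tendsto_const_nhds.congr' ?_
    filter_upwards [eventually_ge_atTop T] with i hi
    simp [used_mono hi hT, show EverUsed ξ η j from ⟨T, hT⟩]
  · simp only [hj, and_false, if_false]
    refine tendsto_const_nhds.congr fun i => ?_
    have : j ∉ used ξ η i := fun h => hj ⟨i, h⟩
    simp [this]

theorem hasSum_extraRow_mul_extraRow (o o' : {o // IsExtra ξ η o}) :
    HasSum (fun j => extraRow ξ η o j * extraRow ξ η o' j) (if o = o' then 1 else 0) := by
  obtain ⟨o, ho⟩ := o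
  obtain ⟨o', ho'⟩ := o'
  simp only [Subtype.mk.injEq]
  cases o <;> cases o' <;> simp only [extraRow, reduceCtorEq, if_false, Option.some.injEq]
  · simpa [← sq] using hasSum_ghost_sq hξ hη hmaj ho
  · rw [mul_single_eq_zero (ghost_eq_zero ho')]; exact hasSum_zero
  · simp_rw [mul_comm (Pi.single _ _ _)]
    rw [mul_single_eq_zero (ghost_eq_zero ho)]; exact hasSum_zero
  · rename_i c c'
    by_cases h : c = c'
    · subst h
      rw [if_pos rfl]
      convert hasSum_pi_single c (1 : ℝ) using 1
      ext j
      by_cases h : j = c <;> simp [h]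
    · rw [if_neg h, mul_single_eq_zero (Pi.single_eq_of_ne (Ne.symm h) (1 : ℝ))]
      exact hasSum_zero

theorem hasSum_row_mul_extraRow (k : ℕ) (o : {o // IsExtra ξ η o}) :
    HasSum (fun j => row ξ η k j * extraRow ξ η o j) 0 := by
  obtain ⟨_ | c, ho⟩ := o
  · exact hasSum_row_mul_ghost hξ hη hmaj k
  · rw [extraRow, mul_single_eq_zero (row_eq_zero_of_notMem fun h => ho ⟨k + 1, h⟩)]
    exact hasSum_zero

theorem hasSum_extraRow_col (j j' : ℕ) :
    HasSum (fun o : {o // IsExtra ξ η o} => extraRow ξ η o j * extraRow ξ η o j')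
      (ghost ξ η j * ghost ξ η j' + if j = j' ∧ ¬EverUsed ξ η j then 1 else 0) := by
  let F : Option ℕ → ℝ := fun o => extraRow ξ η o j * extraRow ξ η o j'
  refine (hasSum_subtype_iff_indicator (f := F) (s := {o | IsExtra ξ η o})).2 ?_
  have hsupp : ∀ o ∉ ({none, some j} : Finset (Option ℕ)),
      Set.indicator {o | IsExtra ξ η o} F o = 0 := by
    rintro (_ | c) ho
    · simp at ho
    · have hc : j ≠ c := fun h => by simp [h] at ho
      simp [F, extraRow, Pi.single_apply, hc]
  convert hasSum_sum_of_ne_finset_zero (L := .unconditional _) hsupp using 1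
  rw [sum_pair (by simp)]
  congr 1
  · by_cases hA : IsActive ξ η
    · simp [Set.indicator, IsExtra, hA, F, extraRow]
    · simp [Set.indicator, IsExtra, hA, F, ghost_eq_zero_of_not_active hξ hη hmaj hA]
  · by_cases h : j = j' <;> by_cases hj : EverUsed ξ η j <;>
      simp [Set.indicator, IsExtra, F, extraRow, h, hj, eq_comm]

theorem tsum_extraRow_sq_mul_eta_pos (o : {o // IsExtra ξ η o}) :
    0 < ∑' j, extraRow ξ η o j ^ 2 * η j := by
  obtain ⟨_ | c, ho⟩ := o
  · exact tsum_ghost_sq_mul_eta_pos hξ hη hmaj ho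
  · rw [tsum_eq_single c fun j hj => by simp [extraRow, hj]]
    simpa [extraRow] using eta_pos_of_not_everUsed hη ho

theorem hasSum_fullRow_mul_fullRow (a b : ℕ ⊕ {o // IsExtra ξ η o}) :
    HasSum (fun j => fullRow ξ η a j * fullRow ξ η b j) (if a = b then 1 else 0) := by
  rcases a with k | o <;> rcases b with l | o'
  · simpa [fullRow] using hasSum_row_mul_row (cos_sq_add_sin_sq hξ hη hmaj) k l
  · simpa [fullRow] using hasSum_row_mul_extraRow hξ hη hmaj k o'
  · simpa [fullRow, mul_comm] using hasSum_row_mul_extraRow hξ hη hmaj l o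
  · simpa [fullRow] using hasSum_extraRow_mul_extraRow hξ hη hmaj o o'

theorem hasSum_fullRow_col (j j' : ℕ) :
    HasSum (fun a => fullRow ξ η a j * fullRow ξ η a j') (if j = j' then 1 else 0) := by
  convert HasSum.sum (f := fun a => fullRow ξ η a j * fullRow ξ η a j')
    (hasSum_row_mul_row_col hξ hη hmaj j j') (hasSum_extraRow_col hξ hη hmaj j j') using 1
  by_cases h : j = j'
  · subst h
    by_cases hj : EverUsed ξ η j <;> simp [hj]
  · simp [h]

end Limit

end Cascade

open Cascade in
theorem exists_orthogonalMatrix_le_of_maj {ξ η : ℕ → ℝ} (hξ : IsCoStar ξ) (hη : IsCoStar η)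
    (hmaj : Maj ξ η) : ∃ U, OrthogonalMatrix U ∧
      ∀ i, ∃ s, HasSum (fun j => U i j ^ 2 * η j) s ∧ ξ i ≤ s := by
  have hev : ∀ o : {o // IsExtra ξ η o}, ∀ᶠ p in atTop, ξ p ≤ ∑' j, extraRow ξ η o j ^ 2 * η j :=
    fun o => (hξ.2.2.eventually (gt_mem_nhds (tsum_extraRow_sq_mul_eta_pos hξ hη hmaj o))).mono
      fun _ => le_of_lt
  obtain ⟨e, hinl, hinr⟩ := exists_equiv_sum_nat hev
  have hU := OrthogonalMatrix.of_equiv _ e.symm (hasSum_fullRow_mul_fullRow hξ hη hmaj)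
    (hasSum_fullRow_col hξ hη hmaj)
  refine ⟨_, hU, fun p => ⟨_, (summable_sq_mul_of_antitone
    (by simpa [sq] using (hU.1 p p).summable) hη.1 hη.2.1).hasSum, ?_⟩⟩
  obtain ⟨a, rfl⟩ := e.surjective p
  rw [e.symm_apply_apply]
  rcases a with k | o
  · calc ξ (e (.inl k)) ≤ ξ k := hξ.2.1 (hinl k)
      _ ≤ out ξ η k := le_out hη.1 k
      _ = ∑' j, fullRow ξ η (.inl k) j ^ 2 * η j := by
        rw [tsum_eq_sum (s := used ξ η (k + 1)) fun j hj => by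
          simp [fullRow, row_eq_zero_of_notMem hj], ← sum_row_sq_mul_eta hξ hη hmaj]
        rfl
  · exact hinr o

/-- For `ξ, η ∈ c₀*`: `ξ ≺ η` iff there exist an orthostochastic matrix `Q`
and a sequence `d` with `0 ≤ d_i ≤ 1` such that `ξ_i = d_i · (Qη)_i` for every `i`. -/
theorem stmt_13 (ξ η : ℕ → ℝ) (hξ : IsCoStar ξ) (hη : IsCoStar η) :
    Maj ξ η ↔
      ∃ (Q : ℕ → ℕ → ℝ) (d : ℕ → ℝ), Orthostochastic Q ∧
        (∀ i, 0 ≤ d i ∧ d i ≤ 1) ∧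
        (∀ i, ∃ s : ℝ, HasSum (fun j => Q i j * η j) s ∧ ξ i = d i * s) := by
  constructor
  · intro hmaj
    obtain ⟨U, hU, hs⟩ := exists_orthogonalMatrix_le_of_maj hξ hη hmaj
    choose s hs hξs using hs
    refine ⟨fun i j => U i j ^ 2, fun i => ξ i / s i, ⟨U, hU, fun _ _ => rfl⟩, fun i => ?_,
      fun i => ⟨s i, hs i, ?_⟩⟩
    · have hs0 : 0 ≤ s i := (hξ.1 i).trans (hξs i)
      exact ⟨div_nonneg (hξ.1 i) hs0, div_le_one_of_le₀ (hξs i) hs0⟩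
    · exact (div_mul_cancel_of_imp fun h => le_antisymm (h ▸ hξs i) (hξ.1 i)).symm
  · rintro ⟨Q, d, hQ, hd, hs⟩
    choose s hs hξs using hs
    refine maj_of_le_substochastic hη.1 hη.2.1 hQ.nonneg hQ.sum_row_le_one hQ.sum_col_le_one hs
      fun i => (hξs i).trans_le (mul_le_of_le_one_left ?_ (hd i).2)
    exact (hs i).nonneg fun j => mul_nonneg (hQ.nonneg i j) (hη.1 j)

end
end

section
/- Let N ≥ 1 and let ξ, η ∈ ℝ^N be nonnegative nonincreasing finite sequences such that ∑_{j=n}^N ξ_j ≤ ∑_{j=n}^N η_j for every 1 ≤ n ≤ N. Then there exists a nonnegative nonincreasing sequence ζ ∈ ℝ^N such that ζ_j ≤ η_j for every j, ∑_{j=n}^N ξ_j ≤ ∑_{j=n}^N ζ_j for every 1 ≤ n ≤ N, and ∑_{j=1}^N ξ_j = ∑_{j=1}^N ζ_j. -/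
/-!
Water-filling: take `ζ = min η c`, with the level `c` chosen by the intermediate value
theorem so that `ζ` and `ξ` have the same total. For the tail inequality at `n`, either
`∑_{j<n} ζ_j ≤ ∑_{j<n} ξ_j` and we pass to complements, or some `ξ_j` with `j < n` lies
below `ζ_j ≤ c`, so that `ξ ≤ c` on the whole tail. That tail splits into the indices where
`ζ = c ≥ ξ` and those where `η < c`; the latter form a tail of `η`, on which `ζ = η` and the
hypothesis applies.
-/

noncomputable section

open Finset

lemma exists_sum_min_eq {ι : Type*} [Fintype ι] (η : ι → ℝ) (hη : ∀ i, 0 ≤ η i)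
    {s : ℝ} (hs₀ : 0 ≤ s) (hs : s ≤ ∑ i, η i) :
    ∃ c, 0 ≤ c ∧ ∑ i, min (η i) c = s := by
  have hcont : Continuous fun c : ℝ => ∑ i, min (η i) c := by fun_prop
  have hzero : ∑ i, min (η i) 0 = 0 := sum_eq_zero fun i _ => min_eq_right (hη i)
  have htop : ∑ i, min (η i) (∑ j, η j) = ∑ i, η i :=
    sum_congr rfl fun i _ => min_eq_left (single_le_sum (fun j _ => hη j) (mem_univ i))
  obtain ⟨c, hc, hcs⟩ := intermediate_value_Icc (sum_nonneg fun i _ => hη i) hcont.continuousOn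
    (by rw [hzero, htop]; exact ⟨hs₀, hs⟩)
  exact ⟨c, hc.1, hcs⟩

section TailMajorization

variable {α M : Type*} [LinearOrder α] [LocallyFiniteOrderTop α]
  [AddCommMonoid M] [Preorder M] {ξ η : α → M}

lemma sum_le_sum_of_isUpperSet (h : ∀ n, ∑ j ∈ Ici n, ξ j ≤ ∑ j ∈ Ici n, η j)
    {U : Finset α} (hU : IsUpperSet (U : Set α)) : ∑ j ∈ U, ξ j ≤ ∑ j ∈ U, η j := by
  rcases U.eq_empty_or_nonempty with rfl | hne
  · exact le_rfl
  · have hIci : U = Ici (U.min' hne) := by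
      ext j
      exact ⟨fun hj => mem_Ici.2 (U.min'_le j hj), fun hj => hU (mem_Ici.1 hj) (U.min'_mem hne)⟩
    rw [hIci]
    exact h _

end TailMajorization

section WaterFilling

variable {α : Type*} [LinearOrder α] [LocallyFiniteOrderTop α] {ξ η : α → ℝ}

lemma sum_Ici_le_sum_Ici_min_of_le (hη : Antitone η)
    (h : ∀ n, ∑ j ∈ Ici n, ξ j ≤ ∑ j ∈ Ici n, η j) {c : ℝ} {n : α}
    (hξc : ∀ j ∈ Ici n, ξ j ≤ c) :
    ∑ j ∈ Ici n, ξ j ≤ ∑ j ∈ Ici n, min (η j) c := by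
  rw [← sum_filter_add_sum_filter_not (Ici n) (fun j => c ≤ η j) ξ,
    ← sum_filter_add_sum_filter_not (Ici n) (fun j => c ≤ η j)]
  have hlevel : ∑ j ∈ (Ici n).filter (fun j => c ≤ η j), ξ j
      ≤ ∑ j ∈ (Ici n).filter (fun j => c ≤ η j), min (η j) c := by
    refine sum_le_sum fun j hj => ?_
    rw [mem_filter] at hj
    rw [min_eq_right hj.2]
    exact hξc j hj.1
  have hupper : IsUpperSet ((Ici n).filter (fun j => ¬ c ≤ η j) : Set α) := by
    intro i j hij hi
    simp only [coe_filter, mem_Ici, Set.mem_ofPred_eq, not_le] at hi ⊢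
    exact ⟨hi.1.trans hij, (hη hij).trans_lt hi.2⟩
  have hbelow : ∑ j ∈ (Ici n).filter (fun j => ¬ c ≤ η j), ξ j
      ≤ ∑ j ∈ (Ici n).filter (fun j => ¬ c ≤ η j), min (η j) c := by
    refine (sum_le_sum_of_isUpperSet h hupper).trans_eq (sum_congr rfl fun j hj => ?_)
    exact (min_eq_left (not_le.1 (mem_filter.1 hj).2).le).symm
  exact add_le_add hlevel hbelow

lemma sum_Ici_le_sum_Ici_min [Fintype α] [DecidableEq α] (hξ : Antitone ξ)
    (hη : Antitone η) (h : ∀ n, ∑ j ∈ Ici n, ξ j ≤ ∑ j ∈ Ici n, η j) {c : ℝ}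
    (htotal : ∑ j, ξ j = ∑ j, min (η j) c) (n : α) :
    ∑ j ∈ Ici n, ξ j ≤ ∑ j ∈ Ici n, min (η j) c := by
  by_cases hhead : ∑ j ∈ (Ici n)ᶜ, min (η j) c ≤ ∑ j ∈ (Ici n)ᶜ, ξ j
  · have hξsplit := sum_compl_add_sum (Ici n) ξ
    have hζsplit := sum_compl_add_sum (Ici n) fun j => min (η j) c
    linarith
  · obtain ⟨i, hi, hξi⟩ := exists_lt_of_sum_lt (not_le.1 hhead)
    have hin : i ≤ n := (not_le.1 (mem_Ici.not.1 (mem_compl.1 hi))).le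
    refine sum_Ici_le_sum_Ici_min_of_le hη h fun j hj => ?_
    exact (hξ (hin.trans (mem_Ici.1 hj))).trans (hξi.le.trans (min_le_right _ _))

end WaterFilling

theorem stmt_15_general (N : ℕ) (ξ η : Fin N → ℝ)
    (hξ0 : ∀ i, 0 ≤ ξ i) (hη0 : ∀ i, 0 ≤ η i)
    (hξm : Antitone ξ) (hηm : Antitone η)
    (h : ∀ n : Fin N, ∑ j ∈ Finset.Ici n, ξ j ≤ ∑ j ∈ Finset.Ici n, η j) :
    ∃ ζ : Fin N → ℝ, (∀ i, 0 ≤ ζ i) ∧ Antitone ζ ∧ (∀ j, ζ j ≤ η j) ∧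
      (∀ n : Fin N, ∑ j ∈ Finset.Ici n, ξ j ≤ ∑ j ∈ Finset.Ici n, ζ j) ∧
      (∑ j, ξ j = ∑ j, ζ j) := by
  have htotal : ∑ j, ξ j ≤ ∑ j, η j := by
    simpa using sum_le_sum_of_isUpperSet h (U := univ) (by simpa using isUpperSet_univ)
  obtain ⟨c, hc, hcξ⟩ := exists_sum_min_eq η hη0 (sum_nonneg fun i _ => hξ0 i) htotal
  refine ⟨fun j => min (η j) c, fun i => le_min (hη0 i) hc,
    fun i j hij => min_le_min_right c (hηm hij), fun j => min_le_left _ _,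
    sum_Ici_le_sum_Ici_min hξm hηm h hcξ.symm, hcξ.symm⟩

/-- (finite intermediate sequence result for tail majorization)
If `ξ, η ∈ ℝ^N` are nonnegative nonincreasing and `∑_{j=n}^N ξ_j ≤ ∑_{j=n}^N η_j` for
every `1 ≤ n ≤ N`, then there is a nonnegative nonincreasing `ζ ∈ ℝ^N` with `ζ ≤ η`,
`∑_{j=n}^N ξ_j ≤ ∑_{j=n}^N ζ_j` for every `n`, and `∑_{j=1}^N ξ_j = ∑_{j=1}^N ζ_j`
(i.e. `ξ ≼_∞ ζ ≤ η`). -/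
theorem stmt_15 (N : ℕ) (hN : 1 ≤ N) (ξ η : Fin N → ℝ)
    (hξ0 : ∀ i, 0 ≤ ξ i) (hη0 : ∀ i, 0 ≤ η i)
    (hξm : Antitone ξ) (hηm : Antitone η)
    (h : ∀ n : Fin N, ∑ j ∈ Finset.Ici n, ξ j ≤ ∑ j ∈ Finset.Ici n, η j) :
    ∃ ζ : Fin N → ℝ, (∀ i, 0 ≤ ζ i) ∧ Antitone ζ ∧ (∀ j, ζ j ≤ η j) ∧
      (∀ n : Fin N, ∑ j ∈ Finset.Ici n, ξ j ≤ ∑ j ∈ Finset.Ici n, ζ j) ∧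
      (∑ j, ξ j = ∑ j, ζ j) :=
  stmt_15_general N ξ η hξ0 hη0 hξm hηm h

end
end

section
/- Let ξ, η ∈ c₀*. The following conditions are equivalent: (i) there is a strictly increasing sequence of integers 0 = n_0 < n_1 < n_2 < … such that for every k ≥ 0 and every m > n_k, ∑_{j=n_k+1}^m ξ_j ≤ ∑_{j=n_k+1}^m η_j; (ii) ξ ≺ η and for every m ≥ 1 the set {∑_{j=1}^n (η_j − ξ_j) : n ≥ m} attains its minimum; (iii) there exists ζ ∈ c₀* with ξ ≺_b ζ and ζ_j ≤ η_j for all j; (iii') there exists ρ ∈ c₀* with ξ_j ≤ ρ_j for all j and ρ ≺_b η. -/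
noncomputable section

open Filter Finset

/-- `ξ ≺_b η` (η block majorizes ξ): `ξ ≺ η` and the partial sums agree along some
strictly increasing sequence of indices tending to infinity. -/
def BMaj (ξ η : ℕ → ℝ) : Prop :=
  Maj ξ η ∧ ∃ n : ℕ → ℕ, StrictMono n ∧ (∀ k, 0 < n k) ∧
    ∀ k, ∑ j ∈ range (n k), ξ j = ∑ j ∈ range (n k), η j

/-!
Write `D n = ∑_{j<n} (η_j - ξ_j)` and call `n` a tail minimum of `D` if `D n ≤ D m` for all
`m ≥ n`. Conditions (i) and (ii) both say that `0` is a tail minimum and that there are infinitely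
many; (iii) and (iii') imply this because `D` splits into a nonnegative part vanishing along the
block indices and a nondecreasing part.

Conversely, cut `ℕ` into blocks at suitable tail minima and on each block truncate `d = η - ξ` at a
level `τ ≥ 0` chosen, by the intermediate value theorem, so that the truncated block sum vanishes.
Then `ζ = ξ + min d τ = min η (ξ + τ)` and `ρ = η - min d τ = max ξ (η - τ)` are blockwise
monotone, and their partial sums compare correctly inside a block because the block ends at a
minimum of `D` or `d ≥ 0` up to the point considered. Monotonicity survives at a block boundary `b`
if `η b ≤ ξ (b - 1)`, or if the blocks on both sides of `b` are singletons, where `ζ = ξ` and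
`ρ = η`. So the boundaries are the tail minima `b` with `η b ≤ ξ (b - 1)`, together with the
indices from which on every index is a tail minimum.
-/

section TailMinima

variable {α : Type*}

def tailMinima [Preorder α] (D : ℕ → α) : Set ℕ := {n | IsMinOn D (Set.Ici n) n}

theorem mem_tailMinima [Preorder α] {D : ℕ → α} {n : ℕ} :
    n ∈ tailMinima D ↔ ∀ m, n ≤ m → D n ≤ D m :=
  isMinOn_iff

theorem exists_strictMono_zero_mem_tailMinima_iff [Preorder α] {D : ℕ → α} :
    (∃ n : ℕ → ℕ, n 0 = 0 ∧ StrictMono n ∧ ∀ k, n k ∈ tailMinima D) ↔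
      0 ∈ tailMinima D ∧ (tailMinima D).Infinite := by
  constructor
  · rintro ⟨n, hn0, hn, hT⟩
    exact ⟨hn0 ▸ hT 0, Set.infinite_of_injective_forall_mem hn.injective hT⟩
  · rintro ⟨h0, hinf⟩
    exact ⟨Nat.nth (· ∈ tailMinima D), Nat.nth_zero_of_zero h0, Nat.nth_strictMono hinf,
      Nat.nth_mem_of_infinite hinf⟩

theorem forall_exists_min_iff_tailMinima_infinite [LinearOrder α] {D : ℕ → α} :
    (∀ m, ∃ n, m ≤ n ∧ ∀ n', m ≤ n' → D n ≤ D n') ↔ (tailMinima D).Infinite := by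
  rw [Set.infinite_iff_exists_gt]
  constructor
  · intro h m
    obtain ⟨n, hmn, hn⟩ := h (m + 1)
    exact ⟨n, mem_tailMinima.2 fun n' hn' => hn n' (hmn.trans hn'), hmn⟩
  · intro h m
    obtain ⟨b, hb, hmb⟩ := h m
    obtain ⟨n, hn, hmin⟩ := (Icc m b).exists_min_image D ⟨m, left_mem_Icc.2 hmb.le⟩
    refine ⟨n, (mem_Icc.1 hn).1, fun n' hn' => ?_⟩
    rcases le_total n' b with h' | h'
    · exact hmin n' (mem_Icc.2 ⟨hn', h'⟩)
    · exact (hmin b (mem_Icc.2 ⟨hmb.le, le_rfl⟩)).trans (mem_tailMinima.1 hb n' h')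

theorem mem_tailMinima_add [AddCommMonoid α] [PartialOrder α] [IsOrderedAddMonoid α]
    {A B : ℕ → α} {n : ℕ} (hA : Monotone A) (hB : ∀ m, 0 ≤ B m) (hBn : B n = 0) :
    n ∈ tailMinima (A + B) :=
  mem_tailMinima.2 fun m hm => by
    simpa [hBn] using add_le_add (hA hm) (hB m)

end TailMinima

section MajGap

variable {ξ η ζ : ℕ → ℝ}

def majGap (ξ η : ℕ → ℝ) (n : ℕ) : ℝ := ∑ j ∈ range n, (η j - ξ j)

theorem sum_Ico_sub_eq_majGap_sub {m n : ℕ} (h : m ≤ n) :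
    ∑ j ∈ Ico m n, (η j - ξ j) = majGap ξ η n - majGap ξ η m :=
  sum_Ico_eq_sub _ h

theorem majGap_le_majGap_iff {m n : ℕ} (h : m ≤ n) :
    majGap ξ η m ≤ majGap ξ η n ↔ ∑ j ∈ Ico m n, ξ j ≤ ∑ j ∈ Ico m n, η j := by
  rw [← sub_nonneg, ← sum_Ico_sub_eq_majGap_sub h, sum_sub_distrib, sub_nonneg]

theorem majGap_succ (n : ℕ) : majGap ξ η (n + 1) = majGap ξ η n + (η n - ξ n) :=
  sum_range_succ _ n

theorem majGap_nonneg (h : Maj ξ η) (n : ℕ) : 0 ≤ majGap ξ η n := by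
  rw [majGap, sum_sub_distrib, sub_nonneg]
  exact h n

theorem maj_iff_zero_mem_tailMinima : Maj ξ η ↔ 0 ∈ tailMinima (majGap ξ η) := by
  simp only [mem_tailMinima, zero_le, forall_const, majGap, range_zero, sum_empty]
  exact ⟨majGap_nonneg, fun h n => sub_nonneg.1 (by simpa [sum_sub_distrib] using h n)⟩

theorem mem_tailMinima_majGap_iff {b : ℕ} :
    b ∈ tailMinima (majGap ξ η) ↔
      ∀ m, b < m → ∑ j ∈ Ico b m, ξ j ≤ ∑ j ∈ Ico b m, η j := by
  rw [mem_tailMinima]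
  refine ⟨fun h m hm => (majGap_le_majGap_iff hm.le).1 (h m hm.le), fun h m hm => ?_⟩
  rcases hm.eq_or_lt with rfl | hm
  · exact le_rfl
  · exact (majGap_le_majGap_iff hm.le).2 (h m hm)

theorem majGap_monotone (h : ∀ j, ξ j ≤ η j) : Monotone (majGap ξ η) :=
  monotone_nat_of_le_succ fun n => by rw [majGap_succ]; linarith [h n]

theorem majGap_add_majGap : majGap ξ ζ + majGap ζ η = majGap ξ η := by
  ext n
  simp only [Pi.add_apply, majGap, ← sum_add_distrib, sub_add_sub_cancel']

theorem BMaj.zero_mem_tailMinima_and_infinite (h : BMaj ξ ζ) {A : ℕ → ℝ} (hA : Monotone A) :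
    0 ∈ tailMinima (A + majGap ξ ζ) ∧ (tailMinima (A + majGap ξ ζ)).Infinite := by
  obtain ⟨hmaj, n, hn, -, hsum⟩ := h
  have hmem : ∀ k, n k ∈ tailMinima (A + majGap ξ ζ) := fun k =>
    mem_tailMinima_add hA (majGap_nonneg hmaj) (by rw [majGap, sum_sub_distrib, hsum k, sub_self])
  exact ⟨mem_tailMinima_add hA (majGap_nonneg hmaj) (by simp [majGap]),
    Set.infinite_of_injective_forall_mem hn.injective hmem⟩

end MajGap

section BlockTruncation

theorem exists_sum_min_eq_zero {ι : Type*} (s : Finset ι) (d : ι → ℝ)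
    (h : 0 ≤ ∑ i ∈ s, d i) : ∃ τ, 0 ≤ τ ∧ ∑ i ∈ s, min (d i) τ = 0 := by
  set M := ∑ i ∈ s, |d i|
  have hM : 0 ≤ M := sum_nonneg fun i _ => abs_nonneg _
  have hcont : Continuous fun τ : ℝ => ∑ i ∈ s, min (d i) τ := by fun_prop
  have h0 : ∑ i ∈ s, min (d i) 0 ≤ 0 := sum_nonpos fun i _ => min_le_right _ _
  have hMsum : ∑ i ∈ s, min (d i) M = ∑ i ∈ s, d i := sum_congr rfl fun i hi =>
    min_eq_left ((le_abs_self _).trans (single_le_sum (fun j _ => abs_nonneg (d j)) hi))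
  obtain ⟨τ, hτ, hτ0⟩ := intermediate_value_Icc hM hcont.continuousOn ⟨h0, hMsum ▸ h⟩
  exact ⟨τ, hτ.1, hτ0⟩

theorem sum_Ico_min_nonneg {d : ℕ → ℝ} {τ : ℝ} {s m e : ℕ} (hsm : s ≤ m) (hme : m ≤ e)
    (hτ : 0 ≤ τ) (hsum : ∑ j ∈ Ico s e, min (d j) τ = 0)
    (h : ∑ j ∈ Ico m e, d j ≤ 0 ∨ ∀ j ∈ Ico s m, 0 ≤ d j) :
    0 ≤ ∑ j ∈ Ico s m, min (d j) τ := by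
  rcases h with h | h
  · have hsuff : ∑ j ∈ Ico m e, min (d j) τ ≤ ∑ j ∈ Ico m e, d j :=
      sum_le_sum fun j _ => min_le_left _ _
    rw [← sum_Ico_consecutive _ hsm hme] at hsum
    linarith
  · exact sum_nonneg fun j hj => le_min (h j hj) hτ

variable {r : ℕ → ℕ}

def blockIdx (r : ℕ → ℕ) (j : ℕ) : ℕ := Nat.findGreatest (fun k => r k ≤ j) j

theorem blockIdx_eq (hr : StrictMono r) {j k : ℕ} (h1 : r k ≤ j) (h2 : j < r (k + 1)) :
    blockIdx r j = k :=
  Nat.findGreatest_eq_iff.2 ⟨hr.le_apply.trans h1, fun _ => h1,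
    fun _ hkn _ hn => (h2.trans_le (hr.monotone hkn)).not_ge hn⟩

theorem blockIdx_spec (hr : StrictMono r) (hr0 : r 0 = 0) (j : ℕ) :
    r (blockIdx r j) ≤ j ∧ j < r (blockIdx r j + 1) := by
  refine ⟨Nat.findGreatest_spec (P := fun k => r k ≤ j) (Nat.zero_le j) (by simp [hr0]), ?_⟩
  by_contra! h
  exact Nat.findGreatest_is_greatest (Nat.lt_succ_self _) (hr.le_apply.trans h) h

def blockTrunc (d : ℕ → ℝ) (r : ℕ → ℕ) (τ : ℕ → ℝ) (j : ℕ) : ℝ :=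
  min (d j) (τ (blockIdx r j))

variable {d : ℕ → ℝ} {τ : ℕ → ℝ}

theorem blockTrunc_of_mem_Ico (hr : StrictMono r) {k j : ℕ} (hj : j ∈ Ico (r k) (r (k + 1))) :
    blockTrunc d r τ j = min (d j) (τ k) := by
  rw [blockTrunc, blockIdx_eq hr (mem_Ico.1 hj).1 (mem_Ico.1 hj).2]

theorem blockTrunc_le (j : ℕ) : blockTrunc d r τ j ≤ d j := min_le_left _ _

theorem min_zero_le_blockTrunc (hτ0 : ∀ k, 0 ≤ τ k) (j : ℕ) :
    min (d j) 0 ≤ blockTrunc d r τ j :=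
  min_le_min_left _ (hτ0 _)

theorem sum_Ico_blockTrunc (hr : StrictMono r)
    (hτ : ∀ k, ∑ j ∈ Ico (r k) (r (k + 1)), min (d j) (τ k) = 0) (k : ℕ) :
    ∑ j ∈ Ico (r k) (r (k + 1)), blockTrunc d r τ j = 0 := by
  rw [← hτ k]
  exact sum_congr rfl fun j hj => blockTrunc_of_mem_Ico hr hj

theorem blockTrunc_eq_zero_of_succ (hr : StrictMono r)
    (hτ : ∀ k, ∑ j ∈ Ico (r k) (r (k + 1)), min (d j) (τ k) = 0) {k : ℕ}
    (hk : r (k + 1) = r k + 1) :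
    blockTrunc d r τ (r k) = 0 := by
  simpa [hk] using sum_Ico_blockTrunc hr hτ k

theorem sum_range_blockTrunc_eq_zero (hr : StrictMono r)
    (hτ : ∀ k, ∑ j ∈ Ico (r k) (r (k + 1)), min (d j) (τ k) = 0)
    (hr0 : r 0 = 0) (k : ℕ) :
    ∑ j ∈ range (r k), blockTrunc d r τ j = 0 := by
  induction k with
  | zero => simp [hr0]
  | succ k ih =>
    rw [← sum_range_add_sum_Ico _ (hr.monotone k.le_succ), ih, sum_Ico_blockTrunc hr hτ, add_zero]

theorem sum_range_blockTrunc_nonneg (hr : StrictMono r)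
    (hτ : ∀ k, ∑ j ∈ Ico (r k) (r (k + 1)), min (d j) (τ k) = 0)
    (hr0 : r 0 = 0) (hτ0 : ∀ k, 0 ≤ τ k)
    (hpre : ∀ k m, r k ≤ m → m ≤ r (k + 1) →
      ∑ j ∈ Ico m (r (k + 1)), d j ≤ 0 ∨ ∀ j ∈ Ico (r k) m, 0 ≤ d j) (m : ℕ) :
    0 ≤ ∑ j ∈ range m, blockTrunc d r τ j := by
  obtain ⟨h1, h2⟩ := blockIdx_spec hr hr0 m
  set k := blockIdx r m
  rw [← sum_range_add_sum_Ico _ h1, sum_range_blockTrunc_eq_zero hr hτ hr0, zero_add,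
    sum_congr rfl fun j hj => blockTrunc_of_mem_Ico hr (Ico_subset_Ico_right h2.le hj)]
  exact sum_Ico_min_nonneg h1 h2.le (hτ0 k) (hτ k) (hpre k m h1 h2.le)

variable {ξ η : ℕ → ℝ}

theorem antitone_add_blockTrunc_and_sub (hξ : Antitone ξ) (hη : Antitone η)
    (hr : StrictMono r) (hr0 : r 0 = 0) (hτ0 : ∀ k, 0 ≤ τ k)
    (hτ : ∀ k, ∑ j ∈ Ico (r k) (r (k + 1)), min (η j - ξ j) (τ k) = 0)
    (hbd : ∀ k, η (r (k + 1)) ≤ ξ (r (k + 1) - 1) ∨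
      r (k + 1) = r k + 1 ∧ r (k + 2) = r (k + 1) + 1) :
    Antitone (fun j => ξ j + blockTrunc (fun j => η j - ξ j) r τ j) ∧
      Antitone (fun j => η j - blockTrunc (fun j => η j - ξ j) r τ j) := by
  set w := blockTrunc (fun j => η j - ξ j) r τ
  suffices h : ∀ j, ξ (j + 1) + w (j + 1) ≤ ξ j + w j ∧ η (j + 1) - w (j + 1) ≤ η j - w j from
    ⟨antitone_nat_of_succ_le fun j => (h j).1, antitone_nat_of_succ_le fun j => (h j).2⟩
  intro j
  obtain ⟨h1, h2⟩ := blockIdx_spec hr hr0 j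
  set k := blockIdx r j
  have hξj := hξ (Nat.le_add_right j 1)
  have hηj := hη (Nat.le_add_right j 1)
  rcases (show j + 1 ≤ r (k + 1) from h2).lt_or_eq with hj | hj
  · have hw0 : w j = min (η j - ξ j) (τ k) := blockTrunc_of_mem_Ico hr (mem_Ico.2 ⟨h1, h2⟩)
    have hw1 : w (j + 1) = min (η (j + 1) - ξ (j + 1)) (τ k) :=
      blockTrunc_of_mem_Ico hr (mem_Ico.2 ⟨h1.trans (Nat.le_add_right j 1), hj⟩)
    rw [hw0, hw1, ← min_add_add_left, ← min_add_add_left, ← max_sub_sub_left, ← max_sub_sub_left]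
    simp only [add_sub_cancel, sub_sub_cancel]
    exact ⟨min_le_min hηj (by linarith), max_le_max hξj (by linarith)⟩
  rcases hbd k with hgood | ⟨hk, hk'⟩
  · rw [← hj, Nat.add_sub_cancel] at hgood
    have hw0 := min_zero_le_blockTrunc (d := fun j => η j - ξ j) (r := r) hτ0 j
    have hw1 := min_zero_le_blockTrunc (d := fun j => η j - ξ j) (r := r) hτ0 (j + 1)
    have hwle0 := blockTrunc_le (d := fun j => η j - ξ j) (r := r) (τ := τ) j
    have hwle1 := blockTrunc_le (d := fun j => η j - ξ j) (r := r) (τ := τ) (j + 1)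
    constructor
    · rcases min_choice (η j - ξ j) 0 with h | h <;> rw [h] at hw0 <;> linarith
    · rcases min_choice (η (j + 1) - ξ (j + 1)) 0 with h | h <;> rw [h] at hw1 <;> linarith
  · have hjk : j = r k := by omega
    have hw0 : w j = 0 := hjk ▸ blockTrunc_eq_zero_of_succ hr hτ hk
    have hw1 : w (j + 1) = 0 := by
      rw [hj]
      exact blockTrunc_eq_zero_of_succ hr hτ hk'
    simp only [hw0, hw1, add_zero, sub_zero]
    exact ⟨hξj, hηj⟩

theorem bMaj_of_sum_range {x y : ℕ → ℝ} (hr : StrictMono r) (hr0 : r 0 = 0)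
    (hle : Maj x y) (heq : ∀ k, ∑ j ∈ range (r k), x j = ∑ j ∈ range (r k), y j) : BMaj x y :=
  ⟨hle, fun k => r (k + 1), hr.comp (strictMono_id.add_const 1),
    fun k => hr0 ▸ hr k.succ_pos, fun k => heq (k + 1)⟩

theorem exists_bMaj_of_correction {w : ℕ → ℝ} (hξ : IsCoStar ξ) (hη : IsCoStar η)
    (hr : StrictMono r) (hr0 : r 0 = 0) (hwd : ∀ j, w j ≤ η j - ξ j) (hwξ : ∀ j, -ξ j ≤ w j)
    (hsum_nonneg : ∀ m, 0 ≤ ∑ j ∈ range m, w j) (hsum_zero : ∀ k, ∑ j ∈ range (r k), w j = 0)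
    (hζa : Antitone fun j => ξ j + w j) (hρa : Antitone fun j => η j - w j) :
    (∃ ζ, IsCoStar ζ ∧ BMaj ξ ζ ∧ ∀ j, ζ j ≤ η j) ∧
      (∃ ρ, IsCoStar ρ ∧ (∀ j, ξ j ≤ ρ j) ∧ BMaj ρ η) := by
  obtain ⟨hξ0, -, hξt⟩ := hξ
  obtain ⟨-, -, hηt⟩ := hη
  have hζ0 : ∀ j, 0 ≤ ξ j + w j := fun j => by linarith [hwξ j]
  have hξρ : ∀ j, ξ j ≤ η j - w j := fun j => by linarith [hwd j]
  constructor
  · refine ⟨fun j => ξ j + w j, ⟨hζ0, hζa, ?_⟩, bMaj_of_sum_range hr hr0 (fun m => ?_) fun k => ?_,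
      fun j => by linarith [hwd j]⟩
    · exact squeeze_zero hζ0 (fun j => by linarith [hwd j]) hηt
    · simpa [sum_add_distrib] using hsum_nonneg m
    · simp [sum_add_distrib, hsum_zero k]
  · refine ⟨fun j => η j - w j, ⟨fun j => (hξ0 j).trans (hξρ j), hρa, ?_⟩, hξρ,
      bMaj_of_sum_range hr hr0 (fun m => ?_) fun k => ?_⟩
    · refine squeeze_zero (fun j => (hξ0 j).trans (hξρ j))
        (fun j => (by linarith [hwξ j] : η j - w j ≤ ξ j + η j)) ?_
      simpa using hξt.add hηt
    · simpa [sum_sub_distrib] using hsum_nonneg m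
    · simp [sum_sub_distrib, hsum_zero k]

theorem exists_bMaj_of_blocks (hξ : IsCoStar ξ) (hη : IsCoStar η)
    (hr : StrictMono r) (hr0 : r 0 = 0)
    (hblock : ∀ k, majGap ξ η (r k) ≤ majGap ξ η (r (k + 1)))
    (hpre : ∀ k m, r k ≤ m → m ≤ r (k + 1) →
      majGap ξ η (r (k + 1)) ≤ majGap ξ η m ∨ ∀ j ∈ Ico (r k) m, ξ j ≤ η j)
    (hbd : ∀ k, η (r (k + 1)) ≤ ξ (r (k + 1) - 1) ∨
      r (k + 1) = r k + 1 ∧ r (k + 2) = r (k + 1) + 1) :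
    (∃ ζ, IsCoStar ζ ∧ BMaj ξ ζ ∧ ∀ j, ζ j ≤ η j) ∧
      (∃ ρ, IsCoStar ρ ∧ (∀ j, ξ j ≤ ρ j) ∧ BMaj ρ η) := by
  set d : ℕ → ℝ := fun j => η j - ξ j
  choose τ hτ0 hτ using fun k => exists_sum_min_eq_zero (Ico (r k) (r (k + 1))) d
    (by rw [sum_Ico_sub_eq_majGap_sub (hr.monotone k.le_succ), sub_nonneg]; exact hblock k)
  have hwξ : ∀ j, -ξ j ≤ blockTrunc d r τ j := fun j => by
    have := min_zero_le_blockTrunc (d := d) (r := r) hτ0 j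
    rcases min_choice (η j - ξ j) 0 with h | h <;> simp only [d, h] at this <;>
      linarith [hξ.1 j, hη.1 j]
  obtain ⟨hζa, hρa⟩ := antitone_add_blockTrunc_and_sub hξ.2.1 hη.2.1 hr hr0 hτ0 hτ hbd
  refine exists_bMaj_of_correction hξ hη hr hr0 blockTrunc_le hwξ ?_
    (sum_range_blockTrunc_eq_zero hr hτ hr0) hζa hρa
  exact sum_range_blockTrunc_nonneg hr hτ hr0 hτ0 fun k m h1 h2 => (hpre k m h1 h2).imp
    (fun h => by rw [sum_Ico_sub_eq_majGap_sub h2]; linarith)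
    (fun h j hj => sub_nonneg.2 (h j hj))

end BlockTruncation

section Boundaries

variable {ξ η : ℕ → ℝ}

theorem le_of_mem_tailMinima_majGap {b : ℕ} (hb : b ∈ tailMinima (majGap ξ η)) : ξ b ≤ η b := by
  have := mem_tailMinima.1 hb (b + 1) (Nat.le_add_right b 1)
  rw [majGap_succ] at this
  linarith

theorem sub_one_mem_tailMinima_majGap (hη : Antitone η) {b : ℕ}
    (hb : b ∈ tailMinima (majGap ξ η)) (hb0 : 0 < b) (hbad : ξ (b - 1) < η b) :
    b - 1 ∈ tailMinima (majGap ξ η) := by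
  obtain ⟨c, rfl⟩ : ∃ c, b = c + 1 := ⟨b - 1, by omega⟩
  rw [Nat.add_sub_cancel] at hbad ⊢
  have hlt : majGap ξ η c < majGap ξ η (c + 1) := by
    rw [majGap_succ]; linarith [hη (Nat.le_add_right c 1)]
  refine mem_tailMinima.2 fun m hm => ?_
  rcases hm.eq_or_lt with rfl | hm
  · exact le_rfl
  · exact hlt.le.trans (mem_tailMinima.1 hb m hm)

theorem Icc_subset_tailMinima_majGap (hη : Antitone η) {s p : ℕ} (hp : p ∈ tailMinima (majGap ξ η))
    (hbad : ∀ q, s < q → q ≤ p → q ∈ tailMinima (majGap ξ η) → ξ (q - 1) < η q) :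
    Set.Icc s p ⊆ tailMinima (majGap ξ η) := by
  rintro q ⟨hsq, hqp⟩
  induction hqp using Nat.decreasingInduction with
  | self => exact hp
  | of_succ k hk ih =>
    have hk1 := ih (hsq.trans (Nat.le_add_right k 1))
    simpa using sub_one_mem_tailMinima_majGap hη hk1 k.succ_pos (hbad (k + 1) (by omega) hk hk1)

def blockBoundaries (ξ η : ℕ → ℝ) : Set ℕ :=
  {b | b ∈ tailMinima (majGap ξ η) ∧ (b = 0 ∨ η b ≤ ξ (b - 1))} ∪
    {b | Set.Ici b ⊆ tailMinima (majGap ξ η)}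

theorem blockBoundaries_subset : blockBoundaries ξ η ⊆ tailMinima (majGap ξ η) := by
  rintro b (hb | hb)
  exacts [hb.1, hb Set.self_mem_Ici]

theorem blockBoundaries_infinite (hη : Antitone η) (hT : (tailMinima (majGap ξ η)).Infinite) :
    (blockBoundaries ξ η).Infinite := by
  refine Set.infinite_of_forall_exists_gt fun N => ?_
  by_cases h : ∃ b, N < b ∧ b ∈ tailMinima (majGap ξ η) ∧ η b ≤ ξ (b - 1)
  · obtain ⟨b, hNb, hbT, hb⟩ := h
    exact ⟨b, Or.inl ⟨hbT, Or.inr hb⟩, hNb⟩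
  simp only [not_exists, not_and, not_le] at h
  refine ⟨N + 1, Or.inr fun q hq => ?_, N.lt_succ_self⟩
  obtain ⟨p, hpT, hqp⟩ := hT.exists_gt q
  exact Icc_subset_tailMinima_majGap hη hpT (fun q' hq' _ hq'T => h q' (by omega) hq'T)
    ⟨hq, hqp.le⟩

theorem majGap_le_or_of_consecutive (hη : Antitone η) {s e m : ℕ} (hme : m ≤ e)
    (he : e ∈ blockBoundaries ξ η) (hbetween : ∀ q, s < q → q < e → q ∉ blockBoundaries ξ η) :
    majGap ξ η e ≤ majGap ξ η m ∨ ∀ j ∈ Ico s m, ξ j ≤ η j := by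
  set D := majGap ξ η
  refine or_iff_not_imp_left.2 fun hlt => ?_
  rw [not_le] at hlt
  obtain ⟨p, hp, hpmin⟩ := (Icc m e).exists_min_image D ⟨m, left_mem_Icc.2 hme⟩
  obtain ⟨hmp, hpe⟩ := mem_Icc.1 hp
  have hDp : D p < D e := (hpmin m (left_mem_Icc.2 hme)).trans_lt hlt
  have hpT : p ∈ tailMinima D := mem_tailMinima.2 fun n hn => by
    rcases le_total n e with hne | hen
    · exact hpmin n (mem_Icc.2 ⟨hmp.trans hn, hne⟩)
    · exact hDp.le.trans (mem_tailMinima.1 (blockBoundaries_subset he) n hen)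
  have hpe' : p < e := hpe.lt_of_ne (by rintro rfl; exact hDp.false)
  have hsub := Icc_subset_tailMinima_majGap hη hpT fun q hsq hqp hqT =>
    not_le.1 fun hq => hbetween q hsq (by omega) (Or.inl ⟨hqT, Or.inr hq⟩)
  exact fun j hj => le_of_mem_tailMinima_majGap (hsub ⟨(mem_Ico.1 hj).1, by
    have := (mem_Ico.1 hj).2; omega⟩)

theorem le_or_neighbors_mem_of_mem_blockBoundaries (hη : Antitone η) {b : ℕ}
    (hb : b ∈ blockBoundaries ξ η) (hb0 : 0 < b) :
    η b ≤ ξ (b - 1) ∨ b - 1 ∈ blockBoundaries ξ η ∧ b + 1 ∈ blockBoundaries ξ η := by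
  rcases hb with ⟨-, h | h⟩ | hF
  · omega
  · exact Or.inl h
  refine or_iff_not_imp_left.2 fun hbad => ⟨Or.inr fun q hq => ?_, Or.inr fun q hq => hF ?_⟩
  · rcases (Set.mem_Ici.1 hq).eq_or_lt with rfl | hq
    · exact sub_one_mem_tailMinima_majGap hη (hF Set.self_mem_Ici) hb0 (not_le.1 hbad)
    · exact hF (by simp only [Set.mem_Ici]; omega)
  · simp only [Set.mem_Ici] at hq ⊢; omega

end Boundaries

theorem exists_bMaj_of_tailMinima {ξ η : ℕ → ℝ} (hξ : IsCoStar ξ) (hη : IsCoStar η)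
    (hT : 0 ∈ tailMinima (majGap ξ η) ∧ (tailMinima (majGap ξ η)).Infinite) :
    (∃ ζ, IsCoStar ζ ∧ BMaj ξ ζ ∧ ∀ j, ζ j ≤ η j) ∧
      (∃ ρ, IsCoStar ρ ∧ (∀ j, ξ j ≤ ρ j) ∧ BMaj ρ η) := by
  have hB := blockBoundaries_infinite hη.2.1 hT.2
  set r := Nat.nth (· ∈ blockBoundaries ξ η)
  have hr : StrictMono r := Nat.nth_strictMono hB
  have hrB : ∀ k, r k ∈ blockBoundaries ξ η := Nat.nth_mem_of_infinite hB
  have hr0 : r 0 = 0 := Nat.nth_zero_of_zero (Or.inl ⟨hT.1, Or.inl rfl⟩)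
  refine exists_bMaj_of_blocks hξ hη hr hr0
    (fun k => mem_tailMinima.1 (blockBoundaries_subset (hrB k)) _ (hr.monotone k.le_succ))
    (fun k m _ hm => majGap_le_or_of_consecutive hη.2.1 hm (hrB (k + 1))
      fun q hq hq' hqB => (Nat.le_nth_of_lt_nth_succ hq' hqB).not_gt hq) fun k => ?_
  have hk0 : 0 < r (k + 1) := hr0 ▸ hr k.succ_pos
  refine (le_or_neighbors_mem_of_mem_blockBoundaries hη.2.1 (hrB (k + 1)) hk0).imp_right
    fun ⟨hprev, hnext⟩ => ?_
  have h1 : r (k + 1) - 1 ≤ r k := Nat.le_nth_of_lt_nth_succ (Nat.sub_one_lt hk0.ne') hprev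
  have h2 : ¬ r (k + 1) + 1 < r (k + 2) := fun h =>
    (Nat.le_nth_of_lt_nth_succ h hnext).not_gt (Nat.lt_add_one _)
  have h3 : r k < r (k + 1) := hr (Nat.lt_add_one k)
  have h4 : r (k + 1) < r (k + 2) := hr (Nat.lt_add_one (k + 1))
  omega

/-- For `ξ, η ∈ c₀*` the following are equivalent:
(i) there is `0 = n_0 < n_1 < …` such that each shifted tail of `ξ` starting at an `n_k`
is majorized by the corresponding tail of `η`;
(ii) `ξ ≺ η` and for every `m` the set `{∑_{j<n} (η_j − ξ_j) : n ≥ m}` attains a minimum;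
(iii) `ξ ≺_b ζ ≤ η` for some `ζ ∈ c₀*`;
(iii') `ξ ≤ ρ ≺_b η` for some `ρ ∈ c₀*`. -/
theorem stmt_16 (ξ η : ℕ → ℝ) (hξ : IsCoStar ξ) (hη : IsCoStar η) :
    List.TFAE
      [ (∃ n : ℕ → ℕ, n 0 = 0 ∧ StrictMono n ∧
          ∀ k m, n k < m →
            ∑ j ∈ Finset.Ico (n k) m, ξ j ≤ ∑ j ∈ Finset.Ico (n k) m, η j),
        (Maj ξ η ∧ ∀ m : ℕ, ∃ n, m ≤ n ∧ ∀ n', m ≤ n' →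
          ∑ j ∈ range n, (η j - ξ j) ≤ ∑ j ∈ range n', (η j - ξ j)),
        (∃ ζ : ℕ → ℝ, IsCoStar ζ ∧ BMaj ξ ζ ∧ ∀ j, ζ j ≤ η j),
        (∃ ρ : ℕ → ℝ, IsCoStar ρ ∧ (∀ j, ξ j ≤ ρ j) ∧ BMaj ρ η) ] := by
  have hii := and_congr (maj_iff_zero_mem_tailMinima (ξ := ξ) (η := η))
    (forall_exists_min_iff_tailMinima_infinite (D := majGap ξ η))
  tfae_have 1 ↔ 2 := by
    simp only [← mem_tailMinima_majGap_iff]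
    exact exists_strictMono_zero_mem_tailMinima_iff.trans hii.symm
  tfae_have 3 → 2 := by
    rintro ⟨ζ, -, hBM, hζη⟩
    refine hii.2 ?_
    rw [← majGap_add_majGap (ζ := ζ), add_comm]
    exact hBM.zero_mem_tailMinima_and_infinite (majGap_monotone hζη)
  tfae_have 4 → 2 := by
    rintro ⟨ρ, -, hξρ, hBM⟩
    refine hii.2 ?_
    rw [← majGap_add_majGap (ζ := ρ)]
    exact hBM.zero_mem_tailMinima_and_infinite (majGap_monotone hξρ)
  tfae_have 2 → 3 := fun h => (exists_bMaj_of_tailMinima hξ hη (hii.1 h)).1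
  tfae_have 2 → 4 := fun h => (exists_bMaj_of_tailMinima hξ hη (hii.1 h)).2
  tfae_finish

end
end

section
/- Let ξ, η ∈ c₀* with ξ ≺ η. Then: (i) there exists ζ ∈ c₀* with ξ ≼ ζ and ζ_j ≤ η_j for all j; and (ii) there exists ρ ∈ c₀* with ξ_j ≤ ρ_j for all j and ρ ≼ η. -/
noncomputable section

open Filter Finset

/-! (i) If `∑ ξ = s < ∞`, capping the partial sums of `η` at `s` gives `ζ`. If `∑ ξ = ∞`, take
`ζ = η ∘ σ` with `σ` strictly increasing, each `σ n` chosen as late as possible without the partial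
sums of `ζ` ever falling below those of `ξ`; maximality of `σ n` makes the surplus drop below
`η n` at some later time.

(ii) Build `ρ` greedily: `ρ n = min (ρ (n - 1)) (cap)`, the cap being the largest value keeping
`∑_{j ≤ n} ρ j ≤ ∑_{j ≤ n} ξ j + inf_{m > n} ∑_{j < m} (η j - ξ j)`, i.e. keeping the partial sums
below those of `η` forever even if `ρ` continued as `ξ`. Then `ρ ≥ ξ` and `ρ ≺ η`. Wherever the cap
is attained, the surplus `∑ (η - ρ)` later comes within any `ε` of `0`; and it is attained
infinitely often unless `ρ` is eventually constant, hence eventually `0`, a degenerate case in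
which the surplus is eventually `0`. -/

open scoped Topology

def gap (ξ η : ℕ → ℝ) (n : ℕ) : ℝ := ∑ j ∈ range n, (η j - ξ j)

lemma Maj.gap_nonneg {ξ η : ℕ → ℝ} (h : Maj ξ η) (n : ℕ) : 0 ≤ gap ξ η n := by
  rw [gap, sum_sub_distrib]
  linarith [h n]

lemma SMaj.of_frequently_gap_le {ξ η : ℕ → ℝ} (hmaj : Maj ξ η)
    (h : ∀ r > 0, ∃ᶠ n in atTop, gap ξ η n ≤ r) : SMaj ξ η := by
  refine ⟨hmaj, le_antisymm ?_ ?_⟩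
  · refine EReal.le_of_forall_lt_iff_le.1 fun r hr => liminf_le_of_frequently_le' ?_
    exact (h r (by exact_mod_cast hr)).mono fun n hn => by exact_mod_cast hn
  · refine le_liminf_of_le (by isBoundedDefault) (Eventually.of_forall fun n => ?_)
    exact_mod_cast hmaj.gap_nonneg n

/-- By Cesàro, `(1/n) ∑_{j<n} ρ j ≤ (1/n) ∑_{j<n} η j` passes to the limit `inf ρ ≤ 0`. -/
lemma tendsto_zero_of_maj {ρ η : ℕ → ℝ} (hρ0 : ∀ n, 0 ≤ ρ n) (hρ : Antitone ρ)
    (hη : Tendsto η atTop (𝓝 0)) (hmaj : Maj ρ η) : Tendsto ρ atTop (𝓝 0) := by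
  have hlim := tendsto_atTop_ciInf hρ ⟨0, Set.forall_mem_range.2 hρ0⟩
  have hinf : ⨅ n, ρ n = 0 := by
    refine le_antisymm (le_of_tendsto_of_tendsto' hlim.cesaro hη.cesaro fun n => ?_) (le_ciInf hρ0)
    exact mul_le_mul_of_nonneg_left (hmaj n) (by positivity)
  rwa [hinf] at hlim

namespace Majorization

section Capped

variable (η : ℕ → ℝ) (s : ℝ)

def cappedIncr (n : ℕ) : ℝ :=
  min s (∑ j ∈ range (n + 1), η j) - min s (∑ j ∈ range n, η j)

variable {η s}

lemma sum_cappedIncr (hs : 0 ≤ s) (n : ℕ) :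
    ∑ j ∈ range n, cappedIncr η s j = min s (∑ j ∈ range n, η j) := by
  refine (sum_range_sub (fun n => min s (∑ j ∈ range n, η j)) n).trans ?_
  simp [hs]

lemma cappedIncr_eq (hη0 : ∀ n, 0 ≤ η n) (n : ℕ) :
    cappedIncr η s n = max 0 (min (η n) (s - ∑ j ∈ range n, η j)) := by
  rw [cappedIncr, sum_range_succ]
  have hηn := hη0 n
  rcases le_total s (∑ j ∈ range n, η j) with h | h <;>
  rcases le_total s (∑ j ∈ range n, η j + η n) with h' | h' <;>
  simp only [min_def, max_def] <;> split_ifs <;> linarith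

lemma cappedIncr_nonneg (hη0 : ∀ n, 0 ≤ η n) (n : ℕ) : 0 ≤ cappedIncr η s n := by
  rw [cappedIncr_eq hη0]
  exact le_max_left _ _

lemma cappedIncr_le (hη0 : ∀ n, 0 ≤ η n) (n : ℕ) : cappedIncr η s n ≤ η n := by
  rw [cappedIncr_eq hη0]
  exact max_le (hη0 n) (min_le_left _ _)

lemma cappedIncr_antitone (hη0 : ∀ n, 0 ≤ η n) (hη : Antitone η) :
    Antitone (cappedIncr η s) := by
  intro m n hmn
  simp only [cappedIncr_eq hη0]
  have hsum : ∑ j ∈ range m, η j ≤ ∑ j ∈ range n, η j :=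
    sum_le_sum_of_subset_of_nonneg (range_mono hmn) fun j _ _ => hη0 j
  gcongr
  exact hη hmn

end Capped

theorem exists_smaj_le_of_summable {ξ η : ℕ → ℝ} (hξ0 : ∀ n, 0 ≤ ξ n) (hξ : Summable ξ)
    (hη : IsCoStar η) (hmaj : Maj ξ η) :
    ∃ ζ : ℕ → ℝ, IsCoStar ζ ∧ SMaj ξ ζ ∧ ∀ j, ζ j ≤ η j := by
  obtain ⟨hη0, hηa, hηt⟩ := hη
  set s := ∑' j, ξ j
  have hle_s : ∀ n, ∑ j ∈ range n, ξ j ≤ s := fun n => hξ.sum_le_tsum _ fun j _ => hξ0 j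
  have hs : 0 ≤ s := tsum_nonneg hξ0
  have hle : ∀ j, cappedIncr η s j ≤ η j := cappedIncr_le hη0
  have hmaj' : Maj ξ (cappedIncr η s) := fun n => by
    rw [sum_cappedIncr hs]
    exact le_min (hle_s n) (hmaj n)
  refine ⟨cappedIncr η s, ⟨cappedIncr_nonneg hη0, cappedIncr_antitone hη0 hηa,
    squeeze_zero (cappedIncr_nonneg hη0) hle hηt⟩, .of_frequently_gap_le hmaj' fun r hr => ?_, hle⟩
  have hgap : Tendsto (fun n => s - ∑ j ∈ range n, ξ j) atTop (𝓝 0) := by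
    simpa [s] using (tendsto_const_nhds (x := s)).sub hξ.hasSum.tendsto_sum_nat
  refine ((hgap.eventually (gt_mem_nhds hr)).mono fun n hn => ?_).frequently
  rw [gap, sum_sub_distrib, sum_cappedIncr hs]
  linarith [min_le_left s (∑ j ∈ range n, η j)]

section Subsequence

variable (ξ η : ℕ → ℝ)

def Safe (n : ℕ) (z : ℝ) (s : ℕ) : Prop :=
  ∀ k, ∑ j ∈ range (n + k), ξ j ≤ z + ∑ i ∈ range k, η (s + i)

def lastSafe (n : ℕ) (z : ℝ) : ℕ := sInf {s | ¬ Safe ξ η n z (s + 1)}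

def greedySum : ℕ → ℝ
  | 0 => 0
  | n + 1 => greedySum n + η (lastSafe ξ η n (greedySum n))

def greedyIdx (n : ℕ) : ℕ := lastSafe ξ η n (greedySum ξ η n)

variable {ξ η}

lemma Safe.anti (hη : Antitone η) {n : ℕ} {z : ℝ} {s t : ℕ} (hts : t ≤ s)
    (h : Safe ξ η n z s) : Safe ξ η n z t := fun k =>
  (h k).trans (by gcongr with i; exact hη (by omega))

lemma Safe.step {n : ℕ} {z : ℝ} {s : ℕ} (h : Safe ξ η n z s) :
    Safe ξ η (n + 1) (z + η s) (s + 1) := fun k => by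
  rw [show n + 1 + k = n + (k + 1) by omega]
  refine (h (k + 1)).trans_eq ?_
  rw [sum_range_succ']
  ring_nf

lemma exists_not_safe (hξ : Tendsto (fun n => ∑ j ∈ range n, ξ j) atTop atTop)
    (hη : Antitone η) (hηt : Tendsto η atTop (𝓝 0)) (n : ℕ) (z : ℝ) :
    ∃ s, ¬ Safe ξ η n z (s + 1) := by
  obtain ⟨M, hM⟩ := (hξ.eventually_gt_atTop (z + 1)).exists_forall_of_atTop
  obtain ⟨s, hs⟩ :=
    ((hηt.const_mul (M : ℝ)).eventually (gt_mem_nhds (by simp : (M : ℝ) * 0 < 1))).exists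
  refine ⟨s, fun h => ?_⟩
  have htail : ∑ i ∈ range M, η (s + 1 + i) ≤ M * η s := by
    simpa using sum_le_card_nsmul (range M) _ (η s) fun i _ => hη (by omega)
  linarith [h M, hM (n + M) (by omega)]

lemma lastSafe_spec (hη : Antitone η) {n : ℕ} {z : ℝ} (hex : ∃ s, ¬ Safe ξ η n z (s + 1))
    {t : ℕ} (ht : Safe ξ η n z t) :
    t ≤ lastSafe ξ η n z ∧ Safe ξ η n z (lastSafe ξ η n z) ∧
      ¬ Safe ξ η n z (lastSafe ξ η n z + 1) := by
  have hnot : ¬ Safe ξ η n z (lastSafe ξ η n z + 1) := Nat.sInf_mem hex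
  refine ⟨?_, ?_, hnot⟩
  · by_contra! hlt
    exact hnot (ht.anti hη hlt)
  · cases hm : lastSafe ξ η n z with
    | zero => exact ht.anti hη (Nat.zero_le t)
    | succ m => exact not_not.1 (Nat.notMem_of_lt_sInf (s := {s | ¬ Safe ξ η n z (s + 1)})
        (by rw [← lastSafe, hm]; omega))

lemma sum_greedyIdx (n : ℕ) : ∑ j ∈ range n, η (greedyIdx ξ η j) = greedySum ξ η n := by
  induction n with
  | zero => rfl
  | succ n ih => rw [sum_range_succ, ih]; rfl

variable (hmaj : Maj ξ η) (hη : Antitone η) (hex : ∀ n z, ∃ s, ¬ Safe ξ η n z (s + 1))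
include hmaj hη hex

lemma safe_greedyIdx (n : ℕ) : Safe ξ η n (greedySum ξ η n) (greedyIdx ξ η n) := by
  induction n with
  | zero =>
    refine (lastSafe_spec hη (hex 0 0) (t := 0) fun k => ?_).2.1
    simpa using hmaj k
  | succ n ih => exact (lastSafe_spec hη (hex _ _) ih.step).2.1

lemma greedyIdx_strictMono : StrictMono (greedyIdx ξ η) :=
  strictMono_nat_of_lt_succ fun n =>
    (lastSafe_spec hη (hex _ _) (safe_greedyIdx hmaj hη hex n).step).1

lemma exists_gap_greedyIdx_lt (hη0 : ∀ n, 0 ≤ η n) (n : ℕ) :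
    ∃ k, gap ξ (η ∘ greedyIdx ξ η) (n + k) < η n := by
  have hσ := greedyIdx_strictMono hmaj hη hex
  obtain ⟨-, -, hnot⟩ := lastSafe_spec hη (hex n (greedySum ξ η n)) (safe_greedyIdx hmaj hη hex n)
  obtain ⟨k, hk⟩ : ∃ k, greedySum ξ η n + ∑ i ∈ range k, η (greedyIdx ξ η n + 1 + i) <
      ∑ j ∈ range (n + k), ξ j := by
    simpa [Safe, greedyIdx] using hnot
  refine ⟨k, ?_⟩
  have hlag : ∑ i ∈ range k, η (greedyIdx ξ η (n + i)) ≤ ∑ i ∈ range k, η (greedyIdx ξ η n + i) :=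
    sum_le_sum fun i _ => hη (by simpa [add_comm] using hσ.add_le_nat i n)
  have hshift : ∑ i ∈ range k, η (greedyIdx ξ η n + i) ≤
      η (greedyIdx ξ η n) + ∑ i ∈ range k, η (greedyIdx ξ η n + 1 + i) := by
    have := sum_range_succ' (fun i => η (greedyIdx ξ η n + i)) k
    rw [sum_range_succ] at this
    simp only [add_zero, ← add_assoc, add_right_comm _ _ 1] at this
    linarith [hη0 (greedyIdx ξ η n + k)]
  have hfirst : η (greedyIdx ξ η n) ≤ η n := hη (hσ.id_le n)
  rw [gap, sum_sub_distrib]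
  simp only [Function.comp_apply]
  rw [sum_range_add (fun j => η (greedyIdx ξ η j)), sum_greedyIdx]
  linarith

end Subsequence

theorem exists_smaj_le_of_not_summable {ξ η : ℕ → ℝ} (hξ0 : ∀ n, 0 ≤ ξ n) (hξ : ¬ Summable ξ)
    (hη : IsCoStar η) (hmaj : Maj ξ η) :
    ∃ ζ : ℕ → ℝ, IsCoStar ζ ∧ SMaj ξ ζ ∧ ∀ j, ζ j ≤ η j := by
  obtain ⟨hη0, hηa, hηt⟩ := hη
  have hex := exists_not_safe ((not_summable_iff_tendsto_nat_atTop_of_nonneg hξ0).1 hξ) hηa hηt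
  have hσ := greedyIdx_strictMono hmaj hηa hex
  have hle : ∀ j, η (greedyIdx ξ η j) ≤ η j := fun j => hηa (hσ.id_le j)
  have hmaj' : Maj ξ (η ∘ greedyIdx ξ η) := fun n => by
    simpa [sum_greedyIdx] using safe_greedyIdx hmaj hηa hex n 0
  refine ⟨η ∘ greedyIdx ξ η, ⟨fun n => hη0 _, hηa.comp_monotone hσ.monotone,
    squeeze_zero (fun n => hη0 _) hle hηt⟩, .of_frequently_gap_le hmaj' fun r hr => ?_, hle⟩
  refine frequently_atTop.2 fun N => ?_
  obtain ⟨n, hn⟩ := ((hηt.eventually (gt_mem_nhds hr)).and (eventually_ge_atTop N)).exists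
  obtain ⟨k, hk⟩ := exists_gap_greedyIdx_lt hmaj hηa hex hη0 n
  exact ⟨n + k, by omega, (hk.trans hn.1).le⟩

section GreedyFill

variable (V : ℕ → ℝ)

/-- The pair `(ρ n, ∑_{j ≤ n} ρ j)`. -/
def greedyFillAux : ℕ → ℝ × ℝ
  | 0 => (V 0, V 0)
  | n + 1 =>
    let r := min (greedyFillAux n).1 (V (n + 1) - (greedyFillAux n).2)
    (r, (greedyFillAux n).2 + r)

def greedyFill (n : ℕ) : ℝ := (greedyFillAux V n).1

variable {V}

lemma sum_range_succ_greedyFill (n : ℕ) :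
    ∑ j ∈ range (n + 1), greedyFill V j = (greedyFillAux V n).2 := by
  induction n with
  | zero => simp [greedyFill, greedyFillAux]
  | succ n ih => rw [sum_range_succ, ih]; rfl

lemma greedyFill_zero : greedyFill V 0 = V 0 := rfl

lemma greedyFill_succ (n : ℕ) : greedyFill V (n + 1) =
    min (greedyFill V n) (V (n + 1) - ∑ j ∈ range (n + 1), greedyFill V j) := by
  rw [sum_range_succ_greedyFill]
  rfl

lemma greedyFill_antitone : Antitone (greedyFill V) :=
  antitone_nat_of_succ_le fun n => (greedyFill_succ n).trans_le (min_le_left _ _)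

lemma greedyFill_le (n : ℕ) : greedyFill V n ≤ V n - ∑ j ∈ range n, greedyFill V j := by
  cases n with
  | zero => simp [greedyFill_zero]
  | succ n => exact (greedyFill_succ n).trans_le (min_le_right _ _)

lemma greedyFill_succ_eq_or (n : ℕ) : greedyFill V (n + 1) = greedyFill V n ∨
    greedyFill V (n + 1) = V (n + 1) - ∑ j ∈ range (n + 1), greedyFill V j := by
  rw [greedyFill_succ]
  exact min_choice _ _

lemma le_greedyFill {ξ : ℕ → ℝ} (hξ : Antitone ξ) (h0 : ξ 0 ≤ V 0)
    (hV : ∀ n, V n + ξ (n + 1) ≤ V (n + 1)) (n : ℕ) : ξ n ≤ greedyFill V n := by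
  induction n with
  | zero => exact h0
  | succ n ih =>
    rw [greedyFill_succ, sum_range_succ]
    refine le_min ((hξ n.le_succ).trans ih) ?_
    linarith [greedyFill_le (V := V) n, hV n]

lemma exists_tight_of_greedyFill_eq_zero {n : ℕ} (h : greedyFill V n = 0) :
    ∃ i, greedyFill V i = 0 ∧ greedyFill V i = V i - ∑ j ∈ range i, greedyFill V j := by
  induction n with
  | zero => exact ⟨0, h, by simp [greedyFill_zero]⟩
  | succ n ih =>
    rcases greedyFill_succ_eq_or n with hc | hc
    · exact ih (hc.symm.trans h)
    · exact ⟨n + 1, h, hc⟩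

lemma frequently_tight (hρ : Tendsto (greedyFill V) atTop (𝓝 0))
    (hne : ∀ n, greedyFill V n ≠ 0) :
    ∃ᶠ n in atTop, greedyFill V n = V n - ∑ j ∈ range n, greedyFill V j := by
  refine frequently_atTop.2 fun N => ?_
  by_contra! h
  have hconst : ∀ k, greedyFill V (N + k) = greedyFill V N := by
    intro k
    induction k with
    | zero => rfl
    | succ k ih =>
      rcases greedyFill_succ_eq_or (N + k) with hc | hc
      · exact hc.trans ih
      · exact absurd hc (h _ (by omega))
  have hlim : Tendsto (fun k => greedyFill V (k + N)) atTop (𝓝 (greedyFill V N)) := by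
    simp only [add_comm _ N, hconst, tendsto_const_nhds]
  exact hne N (tendsto_nhds_unique hlim (hρ.comp (tendsto_add_atTop_nat N)))

end GreedyFill

section TailInf

def tailInf (D : ℕ → ℝ) (n : ℕ) : ℝ := ⨅ k, D (n + k)

variable {D : ℕ → ℝ}

lemma exists_lt_tailInf_add (n : ℕ) {r : ℝ} (hr : 0 < r) : ∃ k, D (n + k) < tailInf D n + r :=
  exists_lt_of_ciInf_lt (by unfold tailInf; linarith)

variable (hD : ∀ n, 0 ≤ D n)
include hD

lemma bddBelow_range_add (n : ℕ) : BddBelow (Set.range fun k => D (n + k)) :=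
  ⟨0, Set.forall_mem_range.2 fun k => hD (n + k)⟩

lemma tailInf_le (n : ℕ) : tailInf D n ≤ D n :=
  (ciInf_le (bddBelow_range_add hD n) 0).trans_eq (by rw [add_zero])

lemma tailInf_nonneg (n : ℕ) : 0 ≤ tailInf D n := le_ciInf fun k => hD (n + k)

lemma tailInf_mono : Monotone (tailInf D) :=
  monotone_nat_of_le_succ fun n => le_ciInf fun k =>
    (ciInf_le (bddBelow_range_add hD n) (k + 1)).trans_eq (by rw [add_right_comm, add_assoc])

lemma tailInf_eq_of_le {n : ℕ} (h : ∀ k, D n ≤ D (n + k)) : tailInf D n = D n :=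
  le_antisymm (tailInf_le hD n) (le_ciInf h)

end TailInf

section UpperFill

def fillBound (ξ η : ℕ → ℝ) (n : ℕ) : ℝ :=
  ∑ j ∈ range (n + 1), ξ j + tailInf (gap ξ η) (n + 1)

def upperFill (ξ η : ℕ → ℝ) : ℕ → ℝ := greedyFill (fillBound ξ η)

variable {ξ η : ℕ → ℝ}

lemma le_upperFill (hξ : Antitone ξ) (hmaj : Maj ξ η) (n : ℕ) : ξ n ≤ upperFill ξ η n := by
  refine le_greedyFill hξ ?_ (fun n => ?_) n
  · simpa [fillBound] using tailInf_nonneg hmaj.gap_nonneg 1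
  · simp only [fillBound, sum_range_succ _ (n + 1)]
    linarith [tailInf_mono hmaj.gap_nonneg (n + 1).le_succ]

lemma sum_upperFill_le (hmaj : Maj ξ η) (n : ℕ) :
    ∑ j ∈ range n, upperFill ξ η j ≤ ∑ j ∈ range n, ξ j + tailInf (gap ξ η) n := by
  cases n with
  | zero => simpa using tailInf_nonneg hmaj.gap_nonneg 0
  | succ n =>
    have := greedyFill_le (V := fillBound ξ η) n
    rw [fillBound] at this
    rw [sum_range_succ, upperFill]
    linarith

lemma maj_upperFill (hmaj : Maj ξ η) : Maj (upperFill ξ η) η := fun n => by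
  have hL := tailInf_le hmaj.gap_nonneg n
  rw [gap, sum_sub_distrib] at hL
  linarith [sum_upperFill_le hmaj n]

lemma isCoStar_upperFill (hξ0 : ∀ n, 0 ≤ ξ n) (hξ : Antitone ξ) (hmaj : Maj ξ η)
    (hη : Tendsto η atTop (𝓝 0)) : IsCoStar (upperFill ξ η) :=
  have h0 n := (hξ0 n).trans (le_upperFill hξ hmaj n)
  ⟨h0, greedyFill_antitone, tendsto_zero_of_maj h0 greedyFill_antitone hη (maj_upperFill hmaj)⟩

lemma gap_upperFill (n : ℕ) :
    gap (upperFill ξ η) η n = gap ξ η n - ∑ j ∈ range n, (upperFill ξ η j - ξ j) := by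
  rw [gap, gap, ← sum_sub_distrib]
  exact sum_congr rfl fun j _ => by ring

/-- Where the cap is attained, `∑_{j ≤ n} (ρ j - ξ j) = inf_{m > n} gap ξ η m`, and this
excess only grows afterwards. -/
lemma exists_gap_upperFill_lt (hξ : Antitone ξ) (hmaj : Maj ξ η) {n : ℕ}
    (htight : upperFill ξ η n = fillBound ξ η n - ∑ j ∈ range n, upperFill ξ η j)
    {r : ℝ} (hr : 0 < r) : ∃ m > n, gap (upperFill ξ η) η m < r := by
  obtain ⟨k, hk⟩ := exists_lt_tailInf_add (D := gap ξ η) (n + 1) hr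
  refine ⟨n + 1 + k, by omega, ?_⟩
  have hexcess : tailInf (gap ξ η) (n + 1) ≤ ∑ j ∈ range (n + 1 + k), (upperFill ξ η j - ξ j) :=
    calc tailInf (gap ξ η) (n + 1) = ∑ j ∈ range (n + 1), (upperFill ξ η j - ξ j) := by
          rw [sum_sub_distrib, sum_range_succ (upperFill ξ η), htight, fillBound]
          ring
      _ ≤ _ := sum_le_sum_of_subset_of_nonneg (range_mono (by omega)) fun j _ _ =>
          sub_nonneg.2 (le_upperFill hξ hmaj j)
  rw [gap_upperFill]
  linarith

/-- Once `ρ` vanishes at a point where the cap is attained, `ξ`, `ρ` and then `η` all vanish from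
there on, and the cap forces the partial sums of `ρ` and `η` to agree. -/
lemma gap_upperFill_eq_zero (hξ0 : ∀ n, 0 ≤ ξ n) (hξ : Antitone ξ) (hmaj : Maj ξ η)
    (hη0 : ∀ n, 0 ≤ η n) (hη : Antitone η) {i : ℕ} (hzero : upperFill ξ η i = 0)
    (htight : upperFill ξ η i = fillBound ξ η i - ∑ j ∈ range i, upperFill ξ η j)
    {m : ℕ} (hm : i ≤ m) : gap (upperFill ξ η) η m = 0 := by
  have hξz : ∀ j ≥ i, ξ j = 0 := fun j hj =>
    le_antisymm ((hξ hj).trans ((le_upperFill hξ hmaj i).trans hzero.le)) (hξ0 j)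
  have hρz : ∀ j ≥ i, upperFill ξ η j = 0 := fun j hj =>
    le_antisymm ((greedyFill_antitone hj).trans hzero.le) ((hξ0 j).trans (le_upperFill hξ hmaj j))
  have hgap_mono : ∀ a ≥ i, ∀ k, gap ξ η a ≤ gap ξ η (a + k) := fun a ha k => by
    rw [gap, gap, sum_range_add]
    refine le_add_of_nonneg_right (sum_nonneg fun j _ => ?_)
    rw [hξz _ (by omega), sub_zero]
    exact hη0 _
  have hLi := tailInf_eq_of_le hmaj.gap_nonneg (hgap_mono i le_rfl)
  have hLi1 := tailInf_eq_of_le hmaj.gap_nonneg (hgap_mono (i + 1) (by omega))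
  have hgap_succ : gap ξ η (i + 1) = gap ξ η i + (η i - ξ i) := sum_range_succ _ _
  have hR := sum_upperFill_le hmaj i
  rw [hzero, fillBound, sum_range_succ] at htight
  have hηz : ∀ j ≥ i, η j = 0 := fun j hj =>
    le_antisymm ((hη hj).trans (by linarith [hξz i le_rfl])) (hη0 j)
  have hconst : gap (upperFill ξ η) η m = gap (upperFill ξ η) η i :=
    eventually_constant_sum (fun j hj => by simp [hηz j hj, hρz j hj]) hm
  rw [hconst, gap_upperFill, sum_sub_distrib]
  linarith [hξz i le_rfl, hηz i le_rfl]

lemma smaj_upperFill (hξ0 : ∀ n, 0 ≤ ξ n) (hξ : Antitone ξ) (hmaj : Maj ξ η)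
    (hη : IsCoStar η) : SMaj (upperFill ξ η) η := by
  obtain ⟨hη0, hηa, hηt⟩ := hη
  refine .of_frequently_gap_le (maj_upperFill hmaj) fun r hr => frequently_atTop.2 fun N => ?_
  by_cases hz : ∃ i, upperFill ξ η i = 0
  · obtain ⟨j, hj⟩ := hz
    obtain ⟨i, hi0, hit⟩ := exists_tight_of_greedyFill_eq_zero hj
    exact ⟨max N i, le_max_left _ _,
      (gap_upperFill_eq_zero hξ0 hξ hmaj hη0 hηa hi0 hit (le_max_right _ _)).trans_le hr.le⟩
  · obtain ⟨n, hn, hnt⟩ := frequently_atTop.1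
      (frequently_tight (isCoStar_upperFill hξ0 hξ hmaj hηt).2.2 (not_exists.1 hz)) N
    obtain ⟨m, hm, hlt⟩ := exists_gap_upperFill_lt hξ hmaj hnt hr
    exact ⟨m, by omega, hlt.le⟩

end UpperFill

end Majorization

open Majorization in
/-- If `ξ, η ∈ c₀*` and `ξ ≺ η`, then there exist `ζ, ρ ∈ c₀*` with
`ξ ≼ ζ ≤ η` and `ξ ≤ ρ ≼ η`. -/
theorem stmt_17 (ξ η : ℕ → ℝ) (hξ : IsCoStar ξ) (hη : IsCoStar η) (hmaj : Maj ξ η) :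
    (∃ ζ : ℕ → ℝ, IsCoStar ζ ∧ SMaj ξ ζ ∧ ∀ j, ζ j ≤ η j) ∧
    (∃ ρ : ℕ → ℝ, IsCoStar ρ ∧ (∀ j, ξ j ≤ ρ j) ∧ SMaj ρ η) := by
  obtain ⟨hξ0, hξa, -⟩ := hξ
  refine ⟨?_, upperFill ξ η, isCoStar_upperFill hξ0 hξa hmaj hη.2.2, le_upperFill hξa hmaj,
    smaj_upperFill hξ0 hξa hmaj hη⟩
  by_cases hs : Summable ξ
  · exact exists_smaj_le_of_summable hξ0 hs hη hmaj
  · exact exists_smaj_le_of_not_summable hξ0 hs hη hmaj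

end
end

section
/- Let ξ, η ∈ c₀*. The following conditions are equivalent: (i) there is a strictly increasing sequence of integers 0 = n_0 < n_1 < n_2 < … such that ∑_{j=n}^{n_k} ξ_j ≤ ∑_{j=n}^{n_k} η_j for every k ≥ 1 and every n with n_{k−1} < n ≤ n_k; (ii) either (a) for every n ≥ 0 there exists m ≥ 1 with ∑_{j=n+1}^{n+m} η_j > ∑_{j=n+1}^{n+m} ξ_j (the tail of η starting after n is not majorized by the tail of ξ), or (b) there exists N ≥ 1 such that ∑_{j=n}^N (η_j − ξ_j) ≥ 0 for all 1 ≤ n ≤ N, ∑_{j=N+1}^{N+m} η_j ≤ ∑_{j=N+1}^{N+m} ξ_j for all m ≥ 1, and equality ∑_{j=N+1}^{N+m} η_j = ∑_{j=N+1}^{N+m} ξ_j holds along some strictly increasing sequence of m's tending to ∞; (iii) there exists ζ ∈ c₀* with ζ_j ≤ η_j for all j and ζ ≺_b ξ; (iii') there exists ρ ∈ c₀* with ξ_j ≤ ρ_j for all j and η ≺_b ρ. -/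
noncomputable section

open Filter Finset

set_option maxHeartbeats 1000000
namespace Stmt18

variable {ξ η : ℕ → ℝ}

def Blocks (ξ η : ℕ → ℝ) (n : ℕ → ℕ) : Prop :=
  n 0 = 0 ∧ StrictMono n ∧ ∀ k a, n k ≤ a → a < n (k+1) →
    ∑ j ∈ Ico a (n (k+1)), ξ j ≤ ∑ j ∈ Ico a (n (k+1)), η j

lemma blocks_chain {n : ℕ → ℕ} (hb : Blocks ξ η n) :
    ∀ K a, a < n K → ∑ j ∈ Ico a (n K), ξ j ≤ ∑ j ∈ Ico a (n K), η j := by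
  obtain ⟨h0, hm, hc⟩ := hb
  intro K
  induction K with
  | zero => intro a ha; rw [h0] at ha; omega
  | succ K ih =>
    intro a ha
    by_cases h : n K ≤ a
    · exact hc K a h ha
    · push_neg at h
      have h1 : n K ≤ n (K+1) := le_of_lt (hm (Nat.lt_succ_self K))
      have e1 := Finset.sum_Ico_consecutive (fun j => ξ j) (le_of_lt h) h1
      have e2 := Finset.sum_Ico_consecutive (fun j => η j) (le_of_lt h) h1
      have t1 := ih a h
      have t2 := hc K (n K) le_rfl (hm (Nat.lt_succ_self K))
      rw [← e1, ← e2]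
      exact add_le_add t1 t2

/-- existence of a block end strictly beyond `t`, with tail condition from `t`. -/
lemma blocks_end {n : ℕ → ℕ} (hb : Blocks ξ η n) (t : ℕ) :
    ∃ B, t < B ∧ ∑ j ∈ Ico t B, ξ j ≤ ∑ j ∈ Ico t B, η j := by
  obtain ⟨h0, hm, hc⟩ := hb
  -- minimal K with n K > t
  have hex : ∃ K, t < n K := ⟨t + 1, lt_of_lt_of_le (Nat.lt_succ_self t) (hm.le_apply)⟩
  classical
  have hKt : t < n (Nat.find hex) := Nat.find_spec hex
  have hKpos : Nat.find hex ≠ 0 := by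
    intro h; rw [h, h0] at hKt; omega
  obtain ⟨K', hKe⟩ := Nat.exists_eq_succ_of_ne_zero hKpos
  rw [hKe] at hKt
  have hK' : ¬ t < n K' := by
    have := Nat.find_min hex (m := K') (by omega)
    exact this
  push_neg at hK'
  exact ⟨n (K' + 1), hKt, hc K' t hK' hKt⟩

end Stmt18

namespace Stmt18B

variable {ξ η : ℕ → ℝ}

lemma two_to_one_caseA
    (ha : ∀ p : ℕ, ∃ m, 1 ≤ m ∧
      ∑ j ∈ Finset.Ico p (p + m), ξ j < ∑ j ∈ Finset.Ico p (p + m), η j) :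
    ∃ n : ℕ → ℕ, n 0 = 0 ∧ StrictMono n ∧
      ∀ k a, n k ≤ a → a < n (k + 1) →
        ∑ j ∈ Finset.Ico a (n (k + 1)), ξ j ≤ ∑ j ∈ Finset.Ico a (n (k + 1)), η j := by
  classical
  set F : ℕ → ℕ := fun p => p + Nat.find (ha p) with hF
  refine ⟨fun k => F^[k] 0, rfl, strictMono_nat_of_lt_succ ?_, ?_⟩
  · intro k
    rw [Function.iterate_succ_apply']
    have := (Nat.find_spec (ha (F^[k] 0))).1
    simp only [hF]
    omega
  · intro k a h1 h2
    simp only [] at h1 h2 ⊢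
    rw [Function.iterate_succ_apply'] at h2 ⊢
    set p := F^[k] 0 with hp
    have hspec := Nat.find_spec (ha p)
    have hFp : F p = p + Nat.find (ha p) := rfl
    rw [hFp] at h2 ⊢
    set M := Nat.find (ha p) with hM
    -- minimality
    have hmin : ∀ j, 1 ≤ j → j < M → ∑ i ∈ Finset.Ico p (p + j), η i ≤ ∑ i ∈ Finset.Ico p (p + j), ξ i := by
      intro j hj1 hj2
      have := Nat.find_min (ha p) hj2
      push_neg at this
      exact this hj1
    rcases Nat.eq_or_lt_of_le h1 with he | hlt
    · rw [← he]
      exact le_of_lt hspec.2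
    · -- p < a < p + M
      have hsplitξ := Finset.sum_Ico_consecutive (fun j => ξ j) (le_of_lt hlt) (le_of_lt h2)
      have hsplitη := Finset.sum_Ico_consecutive (fun j => η j) (le_of_lt hlt) (le_of_lt h2)
      have hmina : ∑ i ∈ Finset.Ico p a, η i ≤ ∑ i ∈ Finset.Ico p a, ξ i := by
        have : a = p + (a - p) := by omega
        rw [this]
        exact hmin (a - p) (by omega) (by omega)
      have h3 := hspec.2
      linarith

lemma two_to_one_caseB {N : ℕ} (hN : 1 ≤ N)
    (hb1 : ∀ a, a < N → ∑ j ∈ Finset.Ico a N, ξ j ≤ ∑ j ∈ Finset.Ico a N, η j)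
    (hb2 : ∀ m : ℕ, ∑ j ∈ Finset.Ico N (N + m), η j ≤ ∑ j ∈ Finset.Ico N (N + m), ξ j)
    {m : ℕ → ℕ} (hm : StrictMono m) (hm1 : ∀ k, 1 ≤ m k)
    (hb3 : ∀ k, ∑ j ∈ Finset.Ico N (N + m k), η j = ∑ j ∈ Finset.Ico N (N + m k), ξ j) :
    ∃ n : ℕ → ℕ, n 0 = 0 ∧ StrictMono n ∧
      ∀ k a, n k ≤ a → a < n (k + 1) →
        ∑ j ∈ Finset.Ico a (n (k + 1)), ξ j ≤ ∑ j ∈ Finset.Ico a (n (k + 1)), η j := by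
  set nn : ℕ → ℕ := fun k => match k with | 0 => 0 | 1 => N | (k+2) => N + m k with hnn
  have e0 : nn 0 = 0 := rfl
  have e1 : nn 1 = N := rfl
  have e2 : ∀ k, nn (k+2) = N + m k := fun k => rfl
  refine ⟨nn, e0, ?_, ?_⟩
  · apply strictMono_nat_of_lt_succ
    intro k
    match k with
    | 0 => show (0:ℕ) < N; omega
    | 1 => show N < N + m 0; have := hm1 0; omega
    | (k+2) =>
      show N + m k < N + m (k+1)
      have := hm (show k < k+1 by omega)
      omega
  · intro k a h1 h2
    -- helper for the tail blocks
    have key : ∀ (X : ℕ), N ≤ a → a < X →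
        (∑ j ∈ Finset.Ico N X, η j = ∑ j ∈ Finset.Ico N X, ξ j) →
        ∑ j ∈ Finset.Ico a X, ξ j ≤ ∑ j ∈ Finset.Ico a X, η j := by
      intro X hNa haX heq
      have hsξ := Finset.sum_Ico_consecutive (fun j => ξ j) hNa (le_of_lt haX)
      have hsη := Finset.sum_Ico_consecutive (fun j => η j) hNa (le_of_lt haX)
      have h2' : ∑ j ∈ Finset.Ico N a, η j ≤ ∑ j ∈ Finset.Ico N a, ξ j := by
        have : a = N + (a - N) := by omega
        rw [this]; exact hb2 (a - N)
      linarith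
    match k with
    | 0 =>
      have h2' : a < N := h2
      exact hb1 a h2'
    | 1 =>
      have h1' : N ≤ a := h1
      have h2' : a < N + m 0 := h2
      exact key (N + m 0) h1' h2' (hb3 0)
    | (k+2) =>
      have h1' : N + m k ≤ a := h1
      have h2' : a < N + m (k+1) := h2
      have hNa : N ≤ a := le_trans (by have := hm1 k; omega) h1'
      exact key (N + m (k + 1)) hNa h2' (hb3 (k+1))

end Stmt18B

namespace Stmt18C

variable {ξ η : ℕ → ℝ}

lemma one_to_two {n : ℕ → ℕ}
    (h0 : n 0 = 0) (hsm : StrictMono n)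
    (hc : ∀ k a, n k ≤ a → a < n (k+1) →
      ∑ j ∈ Finset.Ico a (n (k+1)), ξ j ≤ ∑ j ∈ Finset.Ico a (n (k+1)), η j)
    (hchain : ∀ K a, a < n K → ∑ j ∈ Finset.Ico a (n K), ξ j ≤ ∑ j ∈ Finset.Ico a (n K), η j) :
    (∀ p : ℕ, ∃ m, 1 ≤ m ∧
        ∑ j ∈ Finset.Ico p (p + m), ξ j < ∑ j ∈ Finset.Ico p (p + m), η j) ∨
     (∃ N, 1 ≤ N ∧
        (∀ a, a < N → ∑ j ∈ Finset.Ico a N, ξ j ≤ ∑ j ∈ Finset.Ico a N, η j) ∧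
        (∀ m : ℕ, ∑ j ∈ Finset.Ico N (N + m), η j ≤ ∑ j ∈ Finset.Ico N (N + m), ξ j) ∧
        (∃ m : ℕ → ℕ, StrictMono m ∧ (∀ k, 1 ≤ m k) ∧
          ∀ k, ∑ j ∈ Finset.Ico N (N + m k), η j = ∑ j ∈ Finset.Ico N (N + m k), ξ j)) := by
  classical
  by_cases ha : ∀ p : ℕ, ∃ m, 1 ≤ m ∧
      ∑ j ∈ Finset.Ico p (p + m), ξ j < ∑ j ∈ Finset.Ico p (p + m), η j
  · exact Or.inl ha
  · right
    push_neg at ha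
    obtain ⟨p, hp⟩ := ha
    -- tails of η from p are dominated by tails of ξ, for all m (m = 0 trivial)
    have hp' : ∀ m : ℕ, ∑ j ∈ Finset.Ico p (p + m), η j ≤ ∑ j ∈ Finset.Ico p (p + m), ξ j := by
      intro m
      rcases Nat.eq_zero_or_pos m with rfl | hm
      · simp
      · exact hp m hm
    -- choose N := n (p+1) > p
    set K0 := p + 1 with hK0
    set N := n K0 with hN
    have hpN : p < N := lt_of_lt_of_le (Nat.lt_succ_self p) hsm.le_apply
    have hN1 : 1 ≤ N := by omega
    -- tails from p beyond N
    have hsplit : ∀ X, N ≤ X → ∑ j ∈ Finset.Ico p N, (fun j => η j) j + ∑ j ∈ Finset.Ico N X, η j = ∑ j ∈ Finset.Ico p X, η j := by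
      intro X hX
      exact Finset.sum_Ico_consecutive _ (le_of_lt hpN) hX
    have hsplitξ : ∀ X, N ≤ X → ∑ j ∈ Finset.Ico p N, ξ j + ∑ j ∈ Finset.Ico N X, ξ j = ∑ j ∈ Finset.Ico p X, ξ j := by
      intro X hX
      exact Finset.sum_Ico_consecutive _ (le_of_lt hpN) hX
    have hcore : ∀ m : ℕ, ∑ j ∈ Finset.Ico N (N + m), η j ≤ ∑ j ∈ Finset.Ico N (N + m), ξ j := by
      intro m
      have h1 : ∑ j ∈ Finset.Ico p (p + (N + m - p)), η j ≤ ∑ j ∈ Finset.Ico p (p + (N + m - p)), ξ j := hp' _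
      have hEq : p + (N + m - p) = N + m := by omega
      rw [hEq] at h1
      have h2 : ∑ j ∈ Finset.Ico p N, ξ j ≤ ∑ j ∈ Finset.Ico p N, η j := hchain K0 p hpN
      have e1 := hsplit (N + m) (by omega)
      have e2 := hsplitξ (N + m) (by omega)
      simp only at e1
      linarith
    refine ⟨N, hN1, fun a haN => hchain K0 a haN, hcore, ?_⟩
    -- equality sequence: block ends beyond N
    have hchain2 : ∀ j : ℕ, ∑ i ∈ Finset.Ico N (n (K0 + 1 + j)), ξ i ≤ ∑ i ∈ Finset.Ico N (n (K0 + 1 + j)), η i := by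
      intro j
      exact hchain (K0 + 1 + j) N (hsm (by omega))
    refine ⟨fun j => n (K0 + 1 + j) - N, ?_, ?_, ?_⟩
    · intro j j' hjj
      simp only []
      have h1 : n (K0 + 1 + j) < n (K0 + 1 + j') := hsm (by omega)
      have h2 : N < n (K0 + 1 + j) := hsm (by omega)
      omega
    · intro j
      simp only []
      have : N < n (K0 + 1 + j) := hsm (by omega)
      omega
    · intro j
      have hle : N ≤ n (K0 + 1 + j) := le_of_lt (hsm (by omega))
      have hEq : N + (n (K0 + 1 + j) - N) = n (K0 + 1 + j) := by omega
      rw [hEq]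
      exact le_antisymm (by
        have := hcore (n (K0 + 1 + j) - N)
        rwa [hEq] at this) (hchain2 j)

end Stmt18C

namespace Stmt18D

variable (ξ η : ℕ → ℝ)

def zpair : ℕ → ℝ × ℝ
  | 0 => (min (η 0) (ξ 0), min (η 0) (ξ 0))
  | n+1 =>
      let p := zpair n
      let z := min (min (η (n+1)) p.1) ((∑ j ∈ Finset.range (n+2), ξ j) - p.2)
      (z, p.2 + z)

def zf : ℕ → ℝ := fun n => (zpair ξ η n).1

lemma zpair_snd (n : ℕ) : (zpair ξ η n).2 = ∑ j ∈ Finset.range (n+1), zf ξ η j := by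
  induction n with
  | zero => simp [zpair, zf]
  | succ n ih =>
    rw [Finset.sum_range_succ, ← ih]
    rfl

lemma zf_succ (n : ℕ) :
    zf ξ η (n+1) = min (min (η (n+1)) (zf ξ η n))
      ((∑ j ∈ Finset.range (n+2), ξ j) - ∑ j ∈ Finset.range (n+1), zf ξ η j) := by
  rw [← zpair_snd]
  rfl

lemma zf_le_eta (n : ℕ) : zf ξ η n ≤ η n := by
  cases n with
  | zero => exact min_le_left _ _
  | succ n => rw [zf_succ]; exact le_trans (min_le_left _ _) (min_le_left _ _)

lemma zf_antitone_succ (n : ℕ) : zf ξ η (n+1) ≤ zf ξ η n := by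
  rw [zf_succ]; exact le_trans (min_le_left _ _) (min_le_right _ _)

lemma zf_antitone : Antitone (zf ξ η) :=
  antitone_nat_of_succ_le (zf_antitone_succ ξ η)

lemma Hz_le_Hx (n : ℕ) :
    ∑ j ∈ Finset.range n, zf ξ η j ≤ ∑ j ∈ Finset.range n, ξ j := by
  cases n with
  | zero => simp
  | succ n =>
    cases n with
    | zero =>
      simp only [zero_add, Finset.sum_range_one]
      exact min_le_right _ _
    | succ n =>
      rw [Finset.sum_range_succ (f := zf ξ η), zf_succ]
      have h := min_le_right (min (η (n+1)) (zf ξ η n))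
        ((∑ j ∈ Finset.range (n+2), ξ j) - ∑ j ∈ Finset.range (n+1), zf ξ η j)
      linarith

lemma zf_nonneg (hξ0 : ∀ n, 0 ≤ ξ n) (hη0 : ∀ n, 0 ≤ η n) (n : ℕ) : 0 ≤ zf ξ η n := by
  induction n with
  | zero => exact le_min (hη0 0) (hξ0 0)
  | succ n ih =>
    rw [zf_succ]
    refine le_min (le_min (hη0 (n+1)) ih) ?_
    have h1 : ∑ j ∈ Finset.range (n+1), zf ξ η j ≤ ∑ j ∈ Finset.range (n+1), ξ j :=
      Hz_le_Hx ξ η (n+1)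
    have h2 : ∑ j ∈ Finset.range (n+2), ξ j = ∑ j ∈ Finset.range (n+1), ξ j + ξ (n+1) :=
      Finset.sum_range_succ ξ (n+1)
    have := hξ0 (n+1)
    linarith

/-- touch recurrence for the ζ greedy -/
lemma zf_touch (hξa : Antitone ξ) (hηa : Antitone η)
    (hblk : ∀ t : ℕ, ∃ B, t < B ∧ ∑ j ∈ Finset.Ico t B, ξ j ≤ ∑ j ∈ Finset.Ico t B, η j)
    (t : ℕ) (ht : ∑ j ∈ Finset.range t, zf ξ η j = ∑ j ∈ Finset.range t, ξ j) :
    ∃ B, t < B ∧ ∑ j ∈ Finset.range B, zf ξ η j = ∑ j ∈ Finset.range B, ξ j := by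
  by_contra hcon
  push_neg at hcon
  -- no touch beyond t
  have hnt : ∀ B, t < B → ∑ j ∈ Finset.range B, zf ξ η j < ∑ j ∈ Finset.range B, ξ j := by
    intro B hB
    exact lt_of_le_of_ne (Hz_le_Hx ξ η B) (hcon B hB)
  -- Step A : zf t = η t
  have hA : zf ξ η t = η t := by
    have hnt1 : ∑ j ∈ Finset.range (t+1), zf ξ η j < ∑ j ∈ Finset.range (t+1), ξ j :=
      hnt (t+1) (Nat.lt_succ_self t)
    have hlt : zf ξ η t < ξ t := by
      rw [Finset.sum_range_succ, Finset.sum_range_succ, ht] at hnt1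
      linarith
    cases t with
    | zero =>
      have : zf ξ η 0 = min (η 0) (ξ 0) := rfl
      rw [this] at hlt ⊢
      rcases le_total (η 0) (ξ 0) with h | h
      · rw [min_eq_left h]
      · rw [min_eq_right h] at hlt; linarith
    | succ s =>
      -- budget = ξ (s+1)
      have hbud : (∑ j ∈ Finset.range (s+2), ξ j) - ∑ j ∈ Finset.range (s+1), zf ξ η j
          = ξ (s+1) := by
        rw [Finset.sum_range_succ (f := ξ), ht]
        ring
      have hzs : ξ s ≤ zf ξ η s := by
        have h1 : ∑ j ∈ Finset.range s, zf ξ η j ≤ ∑ j ∈ Finset.range s, ξ j := Hz_le_Hx ξ η s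
        rw [Finset.sum_range_succ, Finset.sum_range_succ] at ht
        linarith
      rw [zf_succ, hbud] at hlt ⊢
      have h2 : min (η (s+1)) (zf ξ η s) < ξ (s+1) := by
        rcases lt_or_ge (min (η (s+1)) (zf ξ η s)) (ξ (s+1)) with h | h
        · exact h
        · exfalso; rw [min_eq_right h] at hlt; exact lt_irrefl _ hlt
      have h3 : η (s+1) < zf ξ η s := by
        by_contra h4
        push_neg at h4
        rw [min_eq_right h4] at h2
        have : ξ (s+1) ≤ ξ s := hξa (Nat.le_succ s)
        linarith
      have h5 : η (s+1) < ξ (s+1) := by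
        rw [min_eq_left (le_of_lt h3)] at h2; exact h2
      rw [min_eq_left (le_of_lt h3)]
      exact min_eq_left (le_of_lt h5)
  -- Step B : zf j = η j for all j ≥ t
  have hB : ∀ j, t ≤ j → zf ξ η j = η j := by
    intro j hj
    induction j, hj using Nat.le_induction with
    | base => exact hA
    | succ j hj ih =>
      have hntj : ∑ i ∈ Finset.range (j+2), zf ξ η i < ∑ i ∈ Finset.range (j+2), ξ i :=
        hnt (j+2) (by omega)
      have hlt : min (η (j+1)) (zf ξ η j) < (∑ i ∈ Finset.range (j+2), ξ i) - ∑ i ∈ Finset.range (j+1), zf ξ η i := by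
        by_contra h4
        push_neg at h4
        have he : zf ξ η (j+1) = (∑ i ∈ Finset.range (j+2), ξ i) - ∑ i ∈ Finset.range (j+1), zf ξ η i := by
          rw [zf_succ]
          exact min_eq_right h4
        rw [Finset.sum_range_succ (f := zf ξ η), he] at hntj
        linarith
      rw [zf_succ, min_eq_left (le_of_lt hlt), ih]
      exact min_eq_left (hηa (Nat.le_succ j))
  -- Step C : contradiction at the next block end
  obtain ⟨B, hBt, hBc⟩ := hblk t
  have hzB : ∑ j ∈ Finset.range B, zf ξ η j = ∑ j ∈ Finset.range t, ξ j + ∑ j ∈ Finset.Ico t B, η j := by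
    rw [← Finset.sum_range_add_sum_Ico (zf ξ η) (le_of_lt hBt), ht]
    congr 1
    apply Finset.sum_congr rfl
    intro j hjm
    exact hB j (Finset.mem_Ico.mp hjm).1
  have hxB : ∑ j ∈ Finset.range B, ξ j = ∑ j ∈ Finset.range t, ξ j + ∑ j ∈ Finset.Ico t B, ξ j :=
    (Finset.sum_range_add_sum_Ico ξ (le_of_lt hBt)).symm
  have := hnt B hBt
  rw [hzB, hxB] at this
  linarith

end Stmt18D

namespace Stmt18E

variable (ξ η : ℕ → ℝ)

/-- sum of an antitone function over `Ico p q` is at most `(q-p) * f p`. -/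
lemma sum_Ico_le_mul {f : ℕ → ℝ} (hf : Antitone f) (p q : ℕ) (hpq : p ≤ q) :
    ∑ j ∈ Finset.Ico p q, f j ≤ ((q - p : ℕ) : ℝ) * f p := by
  have h1 : ∑ j ∈ Finset.Ico p q, f j ≤ (Finset.Ico p q).card • f p := by
    apply Finset.sum_le_card_nsmul
    intro x hx
    exact hf (Finset.mem_Ico.mp hx).1
  rw [Nat.card_Ico] at h1
  rwa [nsmul_eq_mul] at h1

def Sv (h : ℝ) (p : ℕ) : ℝ :=
  sSup (Set.range fun i : ℕ => ((∑ j ∈ Finset.range (p+1+i), η j) - h) / (i+1 : ℝ))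

def rpair : ℕ → ℝ × ℝ
  | 0 => (max (ξ 0) (Sv η 0 0), max (ξ 0) (Sv η 0 0))
  | n+1 =>
      let p := rpair n
      let r := max (ξ (n+1)) (Sv η p.2 (n+1))
      (r, p.2 + r)

def rf : ℕ → ℝ := fun n => (rpair ξ η n).1

lemma rpair_snd (n : ℕ) : (rpair ξ η n).2 = ∑ j ∈ Finset.range (n+1), rf ξ η j := by
  induction n with
  | zero => simp [rpair, rf]
  | succ n ih => rw [Finset.sum_range_succ, ← ih]; rfl

lemma rf_eq (n : ℕ) :
    rf ξ η n = max (ξ n) (Sv η (∑ j ∈ Finset.range n, rf ξ η j) n) := by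
  cases n with
  | zero => simp only [Finset.sum_range_zero]; rfl
  | succ n => rw [← rpair_snd]; rfl

variable {η} in
lemma Sv_bdd (hηa : Antitone η) {h : ℝ} {p : ℕ} (hp : ∑ j ∈ Finset.range p, η j ≤ h) :
    ∀ i : ℕ, ((∑ j ∈ Finset.range (p+1+i), η j) - h) / (i+1 : ℝ) ≤ η p := by
  intro i
  have hsplit : ∑ j ∈ Finset.range p, η j + ∑ j ∈ Finset.Ico p (p+1+i), η j
      = ∑ j ∈ Finset.range (p+1+i), η j :=
    Finset.sum_range_add_sum_Ico η (by omega)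
  have h2 : ∑ j ∈ Finset.Ico p (p+1+i), η j ≤ ((i+1 : ℕ) : ℝ) * η p := by
    have := sum_Ico_le_mul hηa p (p+1+i) (by omega)
    rwa [show p+1+i-p = i+1 by omega] at this
  rw [div_le_iff₀ (by positivity)]
  push_cast at h2 ⊢
  linarith

variable {η} in
lemma Sv_bddAbove (hηa : Antitone η) {h : ℝ} {p : ℕ} (hp : ∑ j ∈ Finset.range p, η j ≤ h) :
    BddAbove (Set.range fun i : ℕ => ((∑ j ∈ Finset.range (p+1+i), η j) - h) / (i+1 : ℝ)) := by
  refine ⟨η p, ?_⟩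
  rintro x ⟨i, rfl⟩
  exact Sv_bdd hηa hp i

variable {η} in
lemma Sv_le (hηa : Antitone η) {h : ℝ} {p : ℕ} (hp : ∑ j ∈ Finset.range p, η j ≤ h) :
    Sv η h p ≤ η p := by
  apply csSup_le (Set.range_nonempty _)
  rintro x ⟨i, rfl⟩
  exact Sv_bdd hηa hp i

variable {η} in
lemma Sv_ge (hηa : Antitone η) {h : ℝ} {p : ℕ} (hp : ∑ j ∈ Finset.range p, η j ≤ h) (i : ℕ) :
    ((∑ j ∈ Finset.range (p+1+i), η j) - h) / (i+1 : ℝ) ≤ Sv η h p :=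
  le_csSup (Sv_bddAbove hηa hp) ⟨i, rfl⟩

variable {ξ η}

lemma rf_maj (hηa : Antitone η) :
    ∀ n, ∑ j ∈ Finset.range n, η j ≤ ∑ j ∈ Finset.range n, rf ξ η j := by
  intro n
  induction n with
  | zero => simp
  | succ n ih =>
    rw [Finset.sum_range_succ (f := rf ξ η)]
    have h1 := Sv_ge hηa ih 0
    push_cast at h1
    have h2 : Sv η (∑ j ∈ Finset.range n, rf ξ η j) n ≤ rf ξ η n := by
      rw [rf_eq]; exact le_max_right _ _
    simp only [Nat.add_zero] at h1
    rw [div_le_iff₀ (by norm_num)] at h1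
    linarith

lemma rf_ge_xi (n : ℕ) : ξ n ≤ rf ξ η n := by
  rw [rf_eq]; exact le_max_left _ _

lemma rf_le_max (hηa : Antitone η) (n : ℕ) : rf ξ η n ≤ max (ξ n) (η n) := by
  rw [rf_eq]
  exact max_le_max le_rfl (Sv_le hηa (rf_maj hηa n))

lemma rf_antitone (hξa : Antitone ξ) (hηa : Antitone η) : Antitone (rf ξ η) := by
  apply antitone_nat_of_succ_le
  intro n
  rw [rf_eq ξ η (n+1)]
  apply max_le
  · exact le_trans (hξa (Nat.le_succ n)) (rf_ge_xi n)
  · apply csSup_le (Set.range_nonempty _)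
    rintro x ⟨i, rfl⟩
    have hsum : ∑ j ∈ Finset.range (n+1), rf ξ η j = ∑ j ∈ Finset.range n, rf ξ η j + rf ξ η n :=
      Finset.sum_range_succ _ n
    have h1 := Sv_ge hηa (rf_maj (ξ := ξ) hηa n) (i+1)
    push_cast at h1
    have h2 : Sv η (∑ j ∈ Finset.range n, rf ξ η j) n ≤ rf ξ η n := by
      rw [rf_eq]; exact le_max_right _ _
    have h3 : ((∑ j ∈ Finset.range (n+1+(i+1)), η j) - ∑ j ∈ Finset.range n, rf ξ η j)
        ≤ ((i:ℝ)+2) * rf ξ η n := by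
      rw [div_le_iff₀ (by positivity)] at h1
      have h4 := mul_le_mul_of_nonneg_right h2 (show (0:ℝ) ≤ (i:ℝ)+1+1 by positivity)
      linarith
    rw [div_le_iff₀ (by positivity), show n+1+1+i = n+1+(i+1) by omega, hsum]
    push_cast
    linarith

end Stmt18E

namespace Stmt18F

variable {ξ η : ℕ → ℝ}

lemma avg_small (hη0 : ∀ n, 0 ≤ η n) (hηt : Tendsto η atTop (nhds 0)) (p : ℕ)
    {ε : ℝ} (hε : 0 < ε) :
    ∃ I : ℕ, ∀ i, I ≤ i → ∑ j ∈ Finset.Ico p (p+1+i), η j ≤ ((i:ℝ)+1) * ε := by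
  have hev : ∀ᶠ j in atTop, η j < ε/2 := hηt.eventually_lt_const (by positivity)
  obtain ⟨M0, hM⟩ := eventually_atTop.mp hev
  set M := max M0 p with hMdef
  set C := ∑ j ∈ Finset.Ico p M, η j with hC
  obtain ⟨I0, hI0⟩ := exists_nat_ge (2*C/ε)
  refine ⟨max I0 M, ?_⟩
  intro i hi
  have hiI0 : (I0:ℝ) ≤ (i:ℝ) := by exact_mod_cast le_trans (le_max_left _ _) hi
  have hiM : M ≤ i := le_trans (le_max_right _ _) hi
  have hpM : p ≤ M := le_max_right _ _
  have hsplit : C + ∑ j ∈ Finset.Ico M (p+1+i), η j = ∑ j ∈ Finset.Ico p (p+1+i), η j :=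
    Finset.sum_Ico_consecutive η hpM (by omega)
  have hsecond : ∑ j ∈ Finset.Ico M (p+1+i), η j ≤ ((i:ℝ)+1) * (ε/2) := by
    have h1 : ∑ j ∈ Finset.Ico M (p+1+i), η j ≤ (Finset.Ico M (p+1+i)).card • (ε/2) := by
      apply Finset.sum_le_card_nsmul
      intro x hx
      have hxM0 : M0 ≤ x := le_trans (le_trans (le_max_left _ _) (Finset.mem_Ico.mp hx).1) le_rfl
      exact le_of_lt (hM x hxM0)
    rw [Nat.card_Ico, nsmul_eq_mul] at h1
    have hcard : ((p+1+i-M : ℕ) : ℝ) ≤ (i:ℝ)+1 := by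
      have : p+1+i-M ≤ i+1 := by omega
      exact_mod_cast this
    have := mul_le_mul_of_nonneg_right hcard (by positivity : (0:ℝ) ≤ ε/2)
    linarith
  have hfirst : C ≤ ((i:ℝ)+1) * (ε/2) := by
    rw [div_le_iff₀ hε] at hI0
    nlinarith
  linarith

lemma rf_touch (hξ0 : ∀ n, 0 ≤ ξ n) (hξa : Antitone ξ)
    (hη0 : ∀ n, 0 ≤ η n) (hηa : Antitone η) (hηt : Tendsto η atTop (nhds 0))
    (hblk : ∀ t : ℕ, ∃ B, t < B ∧ ∑ j ∈ Finset.Ico t B, ξ j ≤ ∑ j ∈ Finset.Ico t B, η j)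
    (t : ℕ) (ht : ∑ j ∈ Finset.range t, η j = ∑ j ∈ Finset.range t, Stmt18E.rf ξ η j) :
    ∃ B, t < B ∧ ∑ j ∈ Finset.range B, η j = ∑ j ∈ Finset.range B, Stmt18E.rf ξ η j := by
  classical
  by_contra hcon
  push_neg at hcon
  have hnt : ∀ B, t < B → ∑ j ∈ Finset.range B, η j < ∑ j ∈ Finset.range B, Stmt18E.rf ξ η j :=
    fun B hB => lt_of_le_of_ne (Stmt18E.rf_maj hηa B) (hcon B hB)
  -- Step (a): rf n = ξ n for all n > t
  have hstep : ∀ n, t < n → Stmt18E.rf ξ η n = ξ n := by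
    intro n hn
    rcases le_or_gt (Stmt18E.Sv η (∑ j ∈ Finset.range n, Stmt18E.rf ξ η j) n) (ξ n) with h | h
    · rw [Stmt18E.rf_eq]; exact max_eq_left h
    · exfalso
      set s := Stmt18E.Sv η (∑ j ∈ Finset.range n, Stmt18E.rf ξ η j) n with hs
      have hrfn : Stmt18E.rf ξ η n = s := by rw [Stmt18E.rf_eq]; exact max_eq_right (le_of_lt h)
      have hspos : 0 < s := lt_of_le_of_lt (hξ0 n) h
      obtain ⟨I, hI⟩ := avg_small hη0 hηt n (half_pos hspos)
      -- strict bound on every term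
      have htau : ∀ i : ℕ,
          ((∑ j ∈ Finset.range (n+1+i), η j) - ∑ j ∈ Finset.range n, Stmt18E.rf ξ η j) / ((i:ℝ)+1) < s := by
        intro i
        have h1 : ∑ j ∈ Finset.range (n+1+i), η j < ∑ j ∈ Finset.range (n+1+i), Stmt18E.rf ξ η j :=
          hnt (n+1+i) (by omega)
        have h2 : ∑ j ∈ Finset.range n, Stmt18E.rf ξ η j + ∑ j ∈ Finset.Ico n (n+1+i), Stmt18E.rf ξ η j
            = ∑ j ∈ Finset.range (n+1+i), Stmt18E.rf ξ η j :=
          Finset.sum_range_add_sum_Ico _ (by omega)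
        have h3 : ∑ j ∈ Finset.Ico n (n+1+i), Stmt18E.rf ξ η j ≤ ((n+1+i-n : ℕ):ℝ) * Stmt18E.rf ξ η n :=
          Stmt18E.sum_Ico_le_mul (Stmt18E.rf_antitone hξa hηa) n (n+1+i) (by omega)
        rw [show n+1+i-n = i+1 by omega] at h3
        rw [div_lt_iff₀ (by positivity)]
        push_cast at h3
        rw [hrfn] at h3
        linarith
      -- tail bound
      have htail : ∀ i : ℕ, I ≤ i →
          ((∑ j ∈ Finset.range (n+1+i), η j) - ∑ j ∈ Finset.range n, Stmt18E.rf ξ η j) / ((i:ℝ)+1) ≤ s/2 := by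
        intro i hi
        have h1 : ∑ j ∈ Finset.range n, η j + ∑ j ∈ Finset.Ico n (n+1+i), η j
            = ∑ j ∈ Finset.range (n+1+i), η j :=
          Finset.sum_range_add_sum_Ico _ (by omega)
        have h2 := hI i hi
        have h3 : ∑ j ∈ Finset.range n, η j ≤ ∑ j ∈ Finset.range n, Stmt18E.rf ξ η j :=
          Stmt18E.rf_maj hηa n
        rw [div_le_iff₀ (by positivity)]
        linarith
      -- finite part
      set T := Finset.range (I+1) with hT
      have hne : T.Nonempty := ⟨0, by simp [hT]⟩
      set A := T.sup' hne (fun i =>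
        ((∑ j ∈ Finset.range (n+1+i), η j) - ∑ j ∈ Finset.range n, Stmt18E.rf ξ η j) / ((i:ℝ)+1)) with hA
      have hAlt : A < s := by
        rw [hA, Finset.sup'_lt_iff]
        intro i _
        exact htau i
      have hles : s ≤ max A (s/2) := by
        rw [hs, Stmt18E.Sv]
        apply csSup_le (Set.range_nonempty _)
        rintro x ⟨i, rfl⟩
        simp only []
        by_cases hiI : i ≤ I
        · refine le_trans ?_ (le_max_left _ _)
          have hmem : i ∈ T := Finset.mem_range.mpr (by omega)
          exact Finset.le_sup' (fun i : ℕ => ((∑ j ∈ Finset.range (n+1+i), η j) - ∑ j ∈ Finset.range n, Stmt18E.rf ξ η j) / ((i:ℝ)+1)) hmem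
        · have hIi : I ≤ i := le_of_lt (not_le.mp hiI)
          exact le_trans (htail i hIi) (le_max_right _ _)
      have : max A (s/2) < s := max_lt hAlt (by linarith)
      linarith
  -- Step (b): value at the touch point
  have hpe : ∑ j ∈ Finset.range t, η j ≤ ∑ j ∈ Finset.range t, Stmt18E.rf ξ η j := le_of_eq ht
  have htouch1 : Stmt18E.Sv η (∑ j ∈ Finset.range t, Stmt18E.rf ξ η j) t = η t := by
    apply le_antisymm (Stmt18E.Sv_le hηa hpe)
    have h0 := Stmt18E.Sv_ge hηa hpe 0
    have he : ∑ j ∈ Finset.range (t+1+0), η j = ∑ j ∈ Finset.range t, Stmt18E.rf ξ η j + η t := by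
      rw [Nat.add_zero, Finset.sum_range_succ, ht]
    rw [he] at h0
    simp only [Nat.cast_zero] at h0
    rw [show (∑ j ∈ Finset.range t, Stmt18E.rf ξ η j + η t - ∑ j ∈ Finset.range t, Stmt18E.rf ξ η j) = η t by ring] at h0
    simpa using h0
  have hrt : Stmt18E.rf ξ η t = max (ξ t) (η t) := by
    rw [Stmt18E.rf_eq, htouch1]
  by_cases hxe : ξ t ≤ η t
  · -- touch at t+1, contradiction
    have : ∑ j ∈ Finset.range (t+1), η j = ∑ j ∈ Finset.range (t+1), Stmt18E.rf ξ η j := by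
      rw [Finset.sum_range_succ, Finset.sum_range_succ, ht, hrt, max_eq_right hxe]
    exact hcon (t+1) (Nat.lt_succ_self t) this
  · push_neg at hxe
    have hrtx : Stmt18E.rf ξ η t = ξ t := by rw [hrt]; exact max_eq_left (le_of_lt hxe)
    obtain ⟨B, hBt, hBc⟩ := hblk t
    have hsplitr : ∑ j ∈ Finset.range t, Stmt18E.rf ξ η j + ∑ j ∈ Finset.Ico t B, Stmt18E.rf ξ η j
        = ∑ j ∈ Finset.range B, Stmt18E.rf ξ η j :=
      Finset.sum_range_add_sum_Ico _ (le_of_lt hBt)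
    have hsplitη : ∑ j ∈ Finset.range t, η j + ∑ j ∈ Finset.Ico t B, η j
        = ∑ j ∈ Finset.range B, η j :=
      Finset.sum_range_add_sum_Ico _ (le_of_lt hBt)
    have hIcoeq : ∑ j ∈ Finset.Ico t B, Stmt18E.rf ξ η j = ∑ j ∈ Finset.Ico t B, ξ j := by
      apply Finset.sum_congr rfl
      intro j hj
      have hj1 := (Finset.mem_Ico.mp hj).1
      rcases eq_or_lt_of_le hj1 with he | hlt
      · rw [← he, hrtx]
      · exact hstep j hlt
    have hcontra := hnt B hBt
    rw [← hsplitr, ← hsplitη, hIcoeq, ← ht] at hcontra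
    linarith

end Stmt18F

namespace Stmt18Aux

variable {ξ η : ℕ → ℝ}

lemma touch_seq {P : ℕ → Prop} (hP0 : P 0) (key : ∀ t, P t → ∃ B, t < B ∧ P B) :
    ∃ g : ℕ → ℕ, StrictMono g ∧ (∀ k, 0 < g k) ∧ ∀ k, P (g k) := by
  classical
  choose! F hF1 hF2 using key
  have hiter : ∀ k, P (F^[k] 0) := by
    intro k
    induction k with
    | zero => simpa using hP0
    | succ k ih => rw [Function.iterate_succ_apply']; exact hF2 _ ih
  refine ⟨fun k => F^[k+1] 0, strictMono_nat_of_lt_succ ?_, ?_, fun k => hiter (k+1)⟩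
  · intro k
    have h := hF1 _ (hiter (k+1))
    have he : F^[k+1+1] 0 = F (F^[k+1] 0) := Function.iterate_succ_apply' F (k+1) 0
    show F^[k+1] 0 < F^[k+1+1] 0
    omega
  · intro k
    have h1 := hF1 _ (hiter k)
    have he : F^[k+1] 0 = F (F^[k] 0) := Function.iterate_succ_apply' F k 0
    show 0 < F^[k+1] 0
    omega

end Stmt18Aux


/-- For `ξ, η ∈ c₀*` the following are equivalent:
(i) there is `0 = n_0 < n_1 < …` such that `∑_{j=a}^{n_{k+1}-1} ξ_j ≤ ∑_{j=a}^{n_{k+1}-1} η_j`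
for every `k` and every `n_k ≤ a < n_{k+1}`;
(ii) either (a) no tail of `η` is majorized by the corresponding tail of `ξ`, or
(b) there is `N ≥ 1` such that `∑_{j=a}^{N-1} (η_j − ξ_j) ≥ 0` for all `a < N`, the tail
of `η` after `N` is block majorized by the tail of `ξ`;
(iii) `ζ ≤ η` and `ζ ≺_b ξ` for some `ζ ∈ c₀*`;
(iii') `ξ ≤ ρ` and `η ≺_b ρ` for some `ρ ∈ c₀*`. -/
theorem stmt_18 (ξ η : ℕ → ℝ) (hξ : IsCoStar ξ) (hη : IsCoStar η) :
    List.TFAE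
      [ (∃ n : ℕ → ℕ, n 0 = 0 ∧ StrictMono n ∧
          ∀ k a, n k ≤ a → a < n (k + 1) →
            ∑ j ∈ Finset.Ico a (n (k + 1)), ξ j ≤ ∑ j ∈ Finset.Ico a (n (k + 1)), η j),
        ((∀ n : ℕ, ∃ m, 1 ≤ m ∧
            ∑ j ∈ Finset.Ico n (n + m), ξ j < ∑ j ∈ Finset.Ico n (n + m), η j) ∨
         (∃ N, 1 ≤ N ∧
            (∀ a, a < N → ∑ j ∈ Finset.Ico a N, ξ j ≤ ∑ j ∈ Finset.Ico a N, η j) ∧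
            (∀ m : ℕ, ∑ j ∈ Finset.Ico N (N + m), η j ≤ ∑ j ∈ Finset.Ico N (N + m), ξ j) ∧
            (∃ m : ℕ → ℕ, StrictMono m ∧ (∀ k, 1 ≤ m k) ∧
              ∀ k, ∑ j ∈ Finset.Ico N (N + m k), η j = ∑ j ∈ Finset.Ico N (N + m k), ξ j))),
        (∃ ζ : ℕ → ℝ, IsCoStar ζ ∧ (∀ j, ζ j ≤ η j) ∧ BMaj ζ ξ),
        (∃ ρ : ℕ → ℝ, IsCoStar ρ ∧ (∀ j, ξ j ≤ ρ j) ∧ BMaj η ρ) ] := by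
  obtain ⟨hξ0, hξa, hξt⟩ := hξ
  obtain ⟨hη0, hηa, hηt⟩ := hη
  tfae_have 1 → 2
  | ⟨n, h0, hsm, hc⟩ => by
    exact Stmt18C.one_to_two h0 hsm hc (Stmt18.blocks_chain ⟨h0, hsm, hc⟩)
  tfae_have 2 → 1
  | h => by
    rcases h with ha | ⟨N, hN, hb1, hb2, m, hsm, hm1, hb3⟩
    · exact Stmt18B.two_to_one_caseA ha
    · exact Stmt18B.two_to_one_caseB hN hb1 hb2 hsm hm1 hb3
  tfae_have 1 → 3
  | ⟨n, h0, hsm, hc⟩ => by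
    have hblk := Stmt18.blocks_end (ξ := ξ) (η := η) ⟨h0, hsm, hc⟩
    refine ⟨Stmt18D.zf ξ η, ⟨Stmt18D.zf_nonneg ξ η hξ0 hη0, Stmt18D.zf_antitone ξ η, ?_⟩,
      Stmt18D.zf_le_eta ξ η, Stmt18D.Hz_le_Hx ξ η, ?_⟩
    · exact squeeze_zero (Stmt18D.zf_nonneg ξ η hξ0 hη0) (Stmt18D.zf_le_eta ξ η) hηt
    · have key := Stmt18D.zf_touch ξ η hξa hηa hblk
      have h0' : ∑ j ∈ Finset.range 0, Stmt18D.zf ξ η j = ∑ j ∈ Finset.range 0, ξ j := by simp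
      obtain ⟨g, hg1, hg2, hg3⟩ := Stmt18Aux.touch_seq h0' key
      exact ⟨g, hg1, hg2, hg3⟩
  tfae_have 3 → 1
  | ⟨ζ, hζco, hζη, hmaj, m, hsm, hpos, heq⟩ => by
    set nn : ℕ → ℕ := fun k => match k with | 0 => 0 | (k+1) => m k with hnn
    refine ⟨nn, rfl, strictMono_nat_of_lt_succ ?_, ?_⟩
    · intro k
      match k with
      | 0 => exact hpos 0
      | (k+1) => exact hsm (Nat.lt_succ_self k)
    · intro k a h1 h2
      have h2' : a < m k := h2
      have h1' : a ≤ m k := le_of_lt h2'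
      have e1 : ∑ j ∈ Finset.range a, ξ j + ∑ j ∈ Finset.Ico a (m k), ξ j
          = ∑ j ∈ Finset.range (m k), ξ j := Finset.sum_range_add_sum_Ico _ h1'
      have e2 : ∑ j ∈ Finset.range a, ζ j + ∑ j ∈ Finset.Ico a (m k), ζ j
          = ∑ j ∈ Finset.range (m k), ζ j := Finset.sum_range_add_sum_Ico _ h1'
      have h3 : ∑ j ∈ Finset.range a, ζ j ≤ ∑ j ∈ Finset.range a, ξ j := hmaj a
      have h4 : ∑ j ∈ Finset.range (m k), ζ j = ∑ j ∈ Finset.range (m k), ξ j := heq k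
      have h5 : ∑ j ∈ Finset.Ico a (m k), ζ j ≤ ∑ j ∈ Finset.Ico a (m k), η j :=
        Finset.sum_le_sum (fun j _ => hζη j)
      have hgoal : ∑ j ∈ Finset.Ico a (nn (k+1)), ξ j ≤ ∑ j ∈ Finset.Ico a (nn (k+1)), η j := by
        show ∑ j ∈ Finset.Ico a (m k), ξ j ≤ ∑ j ∈ Finset.Ico a (m k), η j
        linarith
      exact hgoal
  tfae_have 1 → 4
  | ⟨n, h0, hsm, hc⟩ => by
    have hblk := Stmt18.blocks_end (ξ := ξ) (η := η) ⟨h0, hsm, hc⟩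
    refine ⟨Stmt18E.rf ξ η, ⟨fun n => le_trans (hξ0 n) (Stmt18E.rf_ge_xi n),
      Stmt18E.rf_antitone hξa hηa, ?_⟩, fun n => Stmt18E.rf_ge_xi n,
      fun n => Stmt18E.rf_maj hηa n, ?_⟩
    · refine squeeze_zero (fun n => le_trans (hξ0 n) (Stmt18E.rf_ge_xi n))
        (fun n => Stmt18E.rf_le_max hηa n) ?_
      simpa using hξt.max hηt
    · have key := Stmt18F.rf_touch hξ0 hξa hη0 hηa hηt hblk
      have h0' : ∑ j ∈ Finset.range 0, η j = ∑ j ∈ Finset.range 0, Stmt18E.rf ξ η j := by simp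
      obtain ⟨g, hg1, hg2, hg3⟩ := Stmt18Aux.touch_seq h0' key
      exact ⟨g, hg1, hg2, hg3⟩
  tfae_have 4 → 1
  | ⟨ρ, hρco, hξρ, hmaj, m, hsm, hpos, heq⟩ => by
    set nn : ℕ → ℕ := fun k => match k with | 0 => 0 | (k+1) => m k with hnn
    refine ⟨nn, rfl, strictMono_nat_of_lt_succ ?_, ?_⟩
    · intro k
      match k with
      | 0 => exact hpos 0
      | (k+1) => exact hsm (Nat.lt_succ_self k)
    · intro k a h1 h2
      have h2' : a < m k := h2
      have h1' : a ≤ m k := le_of_lt h2'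
      have e1 : ∑ j ∈ Finset.range a, η j + ∑ j ∈ Finset.Ico a (m k), η j
          = ∑ j ∈ Finset.range (m k), η j := Finset.sum_range_add_sum_Ico _ h1'
      have e2 : ∑ j ∈ Finset.range a, ρ j + ∑ j ∈ Finset.Ico a (m k), ρ j
          = ∑ j ∈ Finset.range (m k), ρ j := Finset.sum_range_add_sum_Ico _ h1'
      have h3 : ∑ j ∈ Finset.range a, η j ≤ ∑ j ∈ Finset.range a, ρ j := hmaj a
      have h4 : ∑ j ∈ Finset.range (m k), η j = ∑ j ∈ Finset.range (m k), ρ j := heq k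
      have h5 : ∑ j ∈ Finset.Ico a (m k), ξ j ≤ ∑ j ∈ Finset.Ico a (m k), ρ j :=
        Finset.sum_le_sum (fun j _ => hξρ j)
      have hgoal : ∑ j ∈ Finset.Ico a (nn (k+1)), ξ j ≤ ∑ j ∈ Finset.Ico a (nn (k+1)), η j := by
        show ∑ j ∈ Finset.Ico a (m k), ξ j ≤ ∑ j ∈ Finset.Ico a (m k), η j
        linarith
      exact hgoal
  tfae_finish


end
end

section
/- Let ξ, η ∈ c₀* both be summable and suppose ∑_{j=n}^∞ ξ_j ≤ ∑_{j=n}^∞ η_j for every n ≥ 1 (ξ is majorized at infinity by η). Then: (i) there exists ζ ∈ c₀* with ζ_j ≤ η_j for all j, ∑_{j=n}^∞ ξ_j ≤ ∑_{j=n}^∞ ζ_j for every n, and ∑_{j=1}^∞ ξ_j = ∑_{j=1}^∞ ζ_j; and (ii) there exists ρ ∈ c₀* with ξ_j ≤ ρ_j for all j, ∑_{j=n}^∞ ρ_j ≤ ∑_{j=n}^∞ η_j for every n, and ∑_{j=1}^∞ ρ_j = ∑_{j=1}^∞ η_j. -/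
noncomputable section

open Filter Finset

/-!
Everything is read off tail sums `X a = ∑_{j ≥ a} ξ j` and `H a = ∑_{j ≥ a} η j`: a summable
`ξ ∈ c₀*` is the sequence of decrements `T a - T (a + 1)` of a convex sequence `T` tending to `0`,
and `ξ ≺_∞ η` says `X ≤ H`.

For (i) take `Z = H - D`, where `D a = min_{k ≤ a} (H k - X k)`. Then `Z ≥ X`, `Z 0 = X 0`, the
decrements of `Z` are at most those of `H` because `D` is nonincreasing, and `Z` stays convex: where
`D` is flat `Z` follows `H`, and where `D` drops `Z` touches `X`.

For (ii) build `R` greedily from `R 0 = H 0`, making each decrement as large as convexity allows while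
keeping `R ≥ X`: `R (n + 2) = max (2 R (n + 1) - R n) (X (n + 2))`. By induction `R ≤ H`, since at
every step either `R` touches `X ≤ H`, or `R` has been following a straight line whose slope is at
least the current slope of `H`.
-/

open Topology

theorem hasSum_sub_succ_of_nonneg {T : ℕ → ℝ} (hT : Tendsto T atTop (𝓝 0))
    (hdec : ∀ n, 0 ≤ T n - T (n + 1)) : HasSum (fun n => T n - T (n + 1)) (T 0) := by
  rw [hasSum_iff_tendsto_nat_of_nonneg hdec]
  simp_rw [Finset.sum_range_sub']
  simpa using (tendsto_const_nhds (x := T 0)).sub hT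

theorem isCoStar_sub_succ {T : ℕ → ℝ} (hT : Tendsto T atTop (𝓝 0))
    (hconv : Antitone fun n => T n - T (n + 1)) : IsCoStar fun n => T n - T (n + 1) := by
  have hlim : Tendsto (fun n => T n - T (n + 1)) atTop (𝓝 0) := by
    simpa using hT.sub (hT.comp (tendsto_add_atTop_nat 1))
  exact ⟨fun n => hconv.le_of_tendsto hlim n, hconv, hlim⟩

def tailSum (f : ℕ → ℝ) (a : ℕ) : ℝ := ∑' j, f (a + j)

theorem tailSum_zero (f : ℕ → ℝ) : tailSum f 0 = ∑' j, f j := by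
  simp only [tailSum, zero_add]

theorem tailSum_sub_tailSum_succ {f : ℕ → ℝ} (hf : Summable f) (a : ℕ) :
    tailSum f a - tailSum f (a + 1) = f a := by
  have hshift : Summable fun j => f (a + j) := by
    simpa only [add_comm] using (summable_nat_add_iff a).mpr hf
  rw [tailSum, hshift.tsum_eq_zero_add, tailSum]
  simp only [add_zero, add_comm 1, add_assoc, add_sub_cancel_right]

theorem tendsto_tailSum (f : ℕ → ℝ) : Tendsto (tailSum f) atTop (𝓝 0) := by
  have hcomm : (fun i => ∑' k, f (k + i)) = tailSum f := by
    funext i; simp only [tailSum, add_comm]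
  exact hcomm ▸ tendsto_sum_nat_add f

theorem antitone_tailSum_sub_succ {f : ℕ → ℝ} (hf : Summable f) (hanti : Antitone f) :
    Antitone fun n => tailSum f n - tailSum f (n + 1) := by
  simpa only [tailSum_sub_tailSum_succ hf] using hanti

theorem exists_isCoStar_tailSum_eq {T : ℕ → ℝ} (hT : Tendsto T atTop (𝓝 0))
    (hconv : Antitone fun n => T n - T (n + 1)) :
    ∃ ζ : ℕ → ℝ, IsCoStar ζ ∧ Summable ζ ∧ (∀ n, ζ n = T n - T (n + 1)) ∧
      ∀ a, tailSum ζ a = T a := by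
  have hζ := isCoStar_sub_succ hT hconv
  have hshift (a : ℕ) : Tendsto (fun n => T (a + n)) atTop (𝓝 0) :=
    hT.comp ((tendsto_add_atTop_nat a).congr fun n => Nat.add_comm n a)
  refine ⟨_, hζ, (hasSum_sub_succ_of_nonneg hT hζ.1).summable, fun _ => rfl, fun a => ?_⟩
  exact (hasSum_sub_succ_of_nonneg (hshift a) fun n => hζ.1 (a + n)).tsum_eq

def runningMin (d : ℕ → ℝ) : ℕ → ℝ
  | 0 => d 0
  | n + 1 => min (runningMin d n) (d (n + 1))

theorem runningMin_le (d : ℕ → ℝ) (n : ℕ) : runningMin d n ≤ d n := by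
  cases n with
  | zero => exact le_rfl
  | succ n => exact min_le_right _ _

theorem runningMin_succ_le (d : ℕ → ℝ) (n : ℕ) : runningMin d (n + 1) ≤ runningMin d n :=
  min_le_left _ _

theorem runningMin_nonneg {d : ℕ → ℝ} (hd : ∀ n, 0 ≤ d n) (n : ℕ) : 0 ≤ runningMin d n := by
  induction n with
  | zero => exact hd 0
  | succ n ih => exact le_min ih (hd _)

theorem tendsto_runningMin {d : ℕ → ℝ} (hd : ∀ n, 0 ≤ d n) (hlim : Tendsto d atTop (𝓝 0)) :
    Tendsto (runningMin d) atTop (𝓝 0) :=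
  squeeze_zero (runningMin_nonneg hd) (runningMin_le d) hlim

section MajorantTail

variable (X H : ℕ → ℝ)

def majorantTail (n : ℕ) : ℝ := H n - runningMin (H - X) n

theorem le_majorantTail (n : ℕ) : X n ≤ majorantTail X H n := by
  have := runningMin_le (H - X) n
  simp only [majorantTail, Pi.sub_apply] at this ⊢
  linarith

theorem majorantTail_zero : majorantTail X H 0 = X 0 := by
  simp only [majorantTail, runningMin, Pi.sub_apply, sub_sub_cancel]

theorem majorantTail_sub_succ_le (n : ℕ) :
    majorantTail X H n - majorantTail X H (n + 1) ≤ H n - H (n + 1) := by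
  have := runningMin_succ_le (H - X) n
  simp only [majorantTail]
  linarith

theorem antitone_majorantTail_sub_succ (hX : Antitone fun n => X n - X (n + 1))
    (hH : Antitone fun n => H n - H (n + 1)) :
    Antitone fun n => majorantTail X H n - majorantTail X H (n + 1) := by
  refine antitone_nat_of_succ_le fun n => ?_
  simp only [majorantTail]
  set D := runningMin (H - X)
  have hXn : X (n + 1) - X (n + 2) ≤ X n - X (n + 1) := hX n.le_succ
  have hHn : H (n + 1) - H (n + 2) ≤ H n - H (n + 1) := hH n.le_succ
  have hDn : D n ≤ H n - X n := runningMin_le (H - X) n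
  have hD2 : D (n + 2) ≤ H (n + 2) - X (n + 2) := runningMin_le (H - X) (n + 2)
  have hD21 : D (n + 2) ≤ D (n + 1) := runningMin_succ_le (H - X) (n + 1)
  have hD1 : D (n + 1) = min (D n) (H (n + 1) - X (n + 1)) := rfl
  rcases min_cases (D n) (H (n + 1) - X (n + 1)) with ⟨hmin, -⟩ | ⟨hmin, -⟩ <;>
    rw [hmin] at hD1 <;> linarith

theorem tendsto_majorantTail (hXH : ∀ n, X n ≤ H n) (hX : Tendsto X atTop (𝓝 0))
    (hH : Tendsto H atTop (𝓝 0)) : Tendsto (majorantTail X H) atTop (𝓝 0) := by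
  have hD := tendsto_runningMin (d := H - X) (fun n => sub_nonneg.2 (hXH n))
    (by rw [← sub_zero 0]; exact hH.sub hX)
  rw [← sub_zero 0]
  exact hH.sub hD

end MajorantTail

section GreedyTail

variable (X : ℕ → ℝ) (c : ℝ)

def greedyTail : ℕ → ℝ
  | 0 => c
  | 1 => X 1
  | n + 2 => max (2 * greedyTail (n + 1) - greedyTail n) (X (n + 2))

theorem greedyTail_add_two (n : ℕ) :
    greedyTail X c (n + 2) = max (2 * greedyTail X c (n + 1) - greedyTail X c n) (X (n + 2)) :=
  rfl

theorem antitone_greedyTail_sub_succ :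
    Antitone fun n => greedyTail X c n - greedyTail X c (n + 1) := by
  refine antitone_nat_of_succ_le fun n => ?_
  have := le_max_left (2 * greedyTail X c (n + 1) - greedyTail X c n) (X (n + 2))
  rw [← greedyTail_add_two] at this
  linarith

variable {X c}

theorem le_greedyTail (hc : X 0 ≤ c) (n : ℕ) : X n ≤ greedyTail X c n := by
  match n with
  | 0 => exact hc
  | 1 => exact le_rfl
  | n + 2 => exact le_max_right _ _

theorem sub_succ_le_greedyTail_sub_succ (hX : Antitone fun n => X n - X (n + 1)) (hc : X 0 ≤ c)
    (n : ℕ) : X n - X (n + 1) ≤ greedyTail X c n - greedyTail X c (n + 1) := by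
  induction n with
  | zero => simp only [greedyTail]; linarith
  | succ n ih =>
    have hXn : X (n + 1) - X (n + 2) ≤ X n - X (n + 1) := hX n.le_succ
    have hR1 := le_greedyTail hc (n + 1)
    rw [greedyTail_add_two]
    rcases max_cases (2 * greedyTail X c (n + 1) - greedyTail X c n) (X (n + 2))
      with ⟨hmax, -⟩ | ⟨hmax, -⟩ <;> rw [hmax] <;> linarith

theorem greedyTail_le {H : ℕ → ℝ} (hX : Antitone fun n => X n - X (n + 1))
    (hH : Antitone fun n => H n - H (n + 1)) (hXH : ∀ n, X n ≤ H n) (n : ℕ) :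
    greedyTail X (H 0) n ≤ H n := by
  set R := greedyTail X (H 0)
  -- Either `R` touches `X` at `n + 1`, or its last decrement dominates the next one of `H`.
  have key : ∀ n, R (n + 1) ≤ H (n + 1) ∧
      (R (n + 1) ≤ X (n + 1) ∨ H (n + 1) - H (n + 2) ≤ R n - R (n + 1)) := by
    intro n
    induction n with
    | zero => exact ⟨hXH 1, Or.inl le_rfl⟩
    | succ n ih =>
      have hR2 : R (n + 2) = max (2 * R (n + 1) - R n) (X (n + 2)) := greedyTail_add_two _ _ n
      rcases le_total (2 * R (n + 1) - R n) (X (n + 2)) with hle | hle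
      · rw [max_eq_right hle] at hR2
        exact ⟨hR2 ▸ hXH (n + 2), Or.inl hR2.le⟩
      rw [max_eq_left hle] at hR2
      rcases ih with ⟨hR1H, htouch | hslope⟩
      · have hdec := sub_succ_le_greedyTail_sub_succ hX (hXH 0) (n + 1)
        have hR2X : R (n + 2) ≤ X (n + 2) := by linarith
        exact ⟨hR2X.trans (hXH _), Or.inl hR2X⟩
      · have hHn : H (n + 2) - H (n + 3) ≤ H (n + 1) - H (n + 2) := hH (n + 1).le_succ
        exact ⟨by linarith, Or.inr (by linarith)⟩
  match n with
  | 0 => exact le_rfl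
  | n + 1 => exact (key n).1

end GreedyTail

theorem exists_strongMajorant_le {ξ η : ℕ → ℝ} (hξ : Antitone ξ) (hη : Antitone η)
    (hξs : Summable ξ) (hηs : Summable η) (h : ∀ a, tailSum ξ a ≤ tailSum η a) :
    ∃ ζ : ℕ → ℝ, IsCoStar ζ ∧ Summable ζ ∧ (∀ j, ζ j ≤ η j) ∧
      (∀ a, tailSum ξ a ≤ tailSum ζ a) ∧ ∑' j, ξ j = ∑' j, ζ j := by
  obtain ⟨ζ, hζ, hζs, hζ_eq, hζ_tail⟩ := exists_isCoStar_tailSum_eq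
    (tendsto_majorantTail _ _ h (tendsto_tailSum ξ) (tendsto_tailSum η))
    (antitone_majorantTail_sub_succ _ _ (antitone_tailSum_sub_succ hξs hξ)
      (antitone_tailSum_sub_succ hηs hη))
  refine ⟨ζ, hζ, hζs, fun j => ?_, fun a => ?_, ?_⟩
  · rw [hζ_eq, ← tailSum_sub_tailSum_succ hηs j]
    exact majorantTail_sub_succ_le _ _ j
  · rw [hζ_tail]
    exact le_majorantTail _ _ a
  · rw [← tailSum_zero, ← tailSum_zero, hζ_tail, majorantTail_zero]

theorem exists_strongMinorant_ge {ξ η : ℕ → ℝ} (hξ : Antitone ξ) (hη : Antitone η)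
    (hξs : Summable ξ) (hηs : Summable η) (h : ∀ a, tailSum ξ a ≤ tailSum η a) :
    ∃ ρ : ℕ → ℝ, IsCoStar ρ ∧ Summable ρ ∧ (∀ j, ξ j ≤ ρ j) ∧
      (∀ a, tailSum ρ a ≤ tailSum η a) ∧ ∑' j, ρ j = ∑' j, η j := by
  have hX := antitone_tailSum_sub_succ hξs hξ
  have hH := antitone_tailSum_sub_succ hηs hη
  have hlim : Tendsto (greedyTail (tailSum ξ) (tailSum η 0)) atTop (𝓝 0) :=
    tendsto_of_tendsto_of_tendsto_of_le_of_le (tendsto_tailSum ξ) (tendsto_tailSum η)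
      (le_greedyTail (h 0)) (greedyTail_le hX hH h)
  obtain ⟨ρ, hρ, hρs, hρ_eq, hρ_tail⟩ :=
    exists_isCoStar_tailSum_eq hlim (antitone_greedyTail_sub_succ _ _)
  refine ⟨ρ, hρ, hρs, fun j => ?_, fun a => ?_, ?_⟩
  · rw [hρ_eq, ← tailSum_sub_tailSum_succ hξs j]
    exact sub_succ_le_greedyTail_sub_succ hX (h 0) j
  · rw [hρ_tail]
    exact greedyTail_le hX hH h a
  · rw [← tailSum_zero, ← tailSum_zero, hρ_tail]
    rfl

/-- If `ξ, η ∈ (ℓ¹)*` and `ξ ≺_∞ η` (tail sums of `ξ` are dominated by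
those of `η`), then:
(i) there is a summable `ζ ∈ c₀*` with `ξ ≼_∞ ζ ≤ η`, and
(ii) there is a summable `ρ ∈ c₀*` with `ξ ≤ ρ ≼_∞ η`. -/
theorem stmt_19 (ξ η : ℕ → ℝ) (hξ : IsCoStar ξ) (hη : IsCoStar η)
    (hξs : Summable ξ) (hηs : Summable η)
    (h : ∀ a : ℕ, ∑' j, ξ (a + j) ≤ ∑' j, η (a + j)) :
    (∃ ζ : ℕ → ℝ, IsCoStar ζ ∧ Summable ζ ∧ (∀ j, ζ j ≤ η j) ∧
        (∀ a : ℕ, ∑' j, ξ (a + j) ≤ ∑' j, ζ (a + j)) ∧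
        (∑' j, ξ j) = (∑' j, ζ j)) ∧
    (∃ ρ : ℕ → ℝ, IsCoStar ρ ∧ Summable ρ ∧ (∀ j, ξ j ≤ ρ j) ∧
        (∀ a : ℕ, ∑' j, ρ (a + j) ≤ ∑' j, η (a + j)) ∧
        (∑' j, ρ j) = (∑' j, η j)) :=
  ⟨exists_strongMajorant_le hξ.2.1 hη.2.1 hξs hηs h,
    exists_strongMinorant_ge hξ.2.1 hη.2.1 hξs hηs h⟩

end
end
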